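/- arXiv:2603.09198 — 7 statements merged into one kernel-verified Lean document; each statement's English description precedes it below -/
import Mathlib

section
/- Let H be a separable infinite-dimensional complex Hilbert space. There exists a bounded derivation D : K(H) → K(H) that is not inner in K(H): for every compact operator x ∈ K(H) there is some T ∈ K(H) with D(T) ≠ Tx − xT. -/
/-!
Fix an orthonormal sequence `e` and the orthogonal projection `P` onto the closed span of its even
terms, and let `D T = T P - P T`. If `D` were implemented by a compact `x`, then `P - x` would
commute with every compact operator, in particular with all rank-one operators, hence be a scalar
`μ`. But then the compact operator `x = P - μ` would have the eigenvalue `1 - μ` on the even `e n`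
and `-μ` on the odd ones; a compact operator has finite-dimensional eigenspaces for nonzero
eigenvalues, so both would vanish, which is absurd.
-/

open scoped InnerProductSpace
open Module End

section InnerProductSpace

variable {𝕜 E : Type*} [RCLike 𝕜] [NormedAddCommGroup E] [InnerProductSpace 𝕜 E]

theorem exists_orthonormal_nat_of_not_finiteDimensional (h : ¬ FiniteDimensional 𝕜 E) :
    ∃ e : ℕ → E, Orthonormal 𝕜 e := by
  let b := Basis.ofVectorSpace 𝕜 E
  have : Infinite (Basis.ofVectorSpaceIndex 𝕜 E) := by
    by_contra hfin
    rw [not_infinite_iff_finite] at hfin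
    exact h (Module.Finite.of_basis b)
  let f := Infinite.natEmbedding (Basis.ofVectorSpaceIndex 𝕜 E)
  exact ⟨_, InnerProductSpace.gramSchmidtNormed_orthonormal (b.linearIndependent.comp f f.injective)⟩

theorem Orthonormal.exists_clm_apply_eq_indicator [CompleteSpace E] {ι : Type*} {e : ι → E}
    (he : Orthonormal 𝕜 e) (s : Set ι) : ∃ P : E →L[𝕜] E, ∀ i, P (e i) = s.indicator e i := by
  let M := (Submodule.span 𝕜 (e '' s)).topologicalClosure
  have : CompleteSpace M := (Submodule.isClosed_topologicalClosure _).completeSpace_coe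
  refine ⟨M.starProjection, fun i => ?_⟩
  by_cases hi : i ∈ s
  · rw [Set.indicator_of_mem hi, Submodule.starProjection_eq_self_iff]
    exact (Submodule.span 𝕜 _).le_topologicalClosure (Submodule.subset_span ⟨i, hi, rfl⟩)
  · rw [Set.indicator_of_notMem hi, Submodule.starProjection_apply_eq_zero_iff,
      Submodule.orthogonal_closure]
    have : Submodule.span 𝕜 {e i} ⟂ Submodule.span 𝕜 (e '' s) :=
      Submodule.isOrtho_span.mpr <| by
        rintro _ rfl _ ⟨j, hj, rfl⟩
        exact he.2 (ne_of_mem_of_not_mem hj hi).symm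
    exact this.le (Submodule.mem_span_singleton_self _)

theorem IsCompactOperator.finiteDimensional_eigenspace {x : E →L[𝕜] E}
    (hx : IsCompactOperator x) {μ : 𝕜} (hμ : μ ≠ 0) :
    FiniteDimensional 𝕜 (eigenspace (x : End 𝕜 E) μ) := by
  let V := eigenspace (x : End 𝕜 E) μ
  have hV : ∀ v ∈ V, (x : End 𝕜 E) v ∈ V := fun v hv => by
    rw [mem_eigenspace_iff.mp hv]; exact V.smul_mem μ hv
  have hid : (id : V → V) = μ⁻¹ • ((x : End 𝕜 E).restrict hV) := by
    ext ⟨v, hv⟩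
    simp [LinearMap.restrict_apply, mem_eigenspace_iff.mp hv, smul_smul, hμ]
  apply FiniteDimensional.of_isCompactOperator_id
  rw [hid]
  exact (hx.restrict hV (ContinuousLinearMap.isClosed_eigenspace x μ)).smul _

theorem IsCompactOperator.eq_zero_of_orthonormal_eigenvectors {ι : Type*} [Infinite ι]
    {e : ι → E} (he : Orthonormal 𝕜 e) {x : E →L[𝕜] E} (hx : IsCompactOperator x) {μ : 𝕜}
    (h : ∀ i, x (e i) = μ • e i) : μ = 0 := by
  by_contra hμ
  have := hx.finiteDimensional_eigenspace hμ
  let V := eigenspace (x : End 𝕜 E) μ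
  have hV : ∀ i, e i ∈ V := fun i => mem_eigenspace_iff.mpr (h i)
  exact Module.Finite.not_linearIndependent_of_infinite (fun i => (⟨e i, hV i⟩ : V))
    (LinearIndependent.of_comp V.subtype he.linearIndependent)

theorem exists_eq_smul_one_of_forall_commute_isCompactOperator {c : E →L[𝕜] E}
    (hc : ∀ T : E →L[𝕜] E, IsCompactOperator T → Commute T c) : ∃ μ : 𝕜, c = μ • 1 := by
  rcases subsingleton_or_nontrivial E with hE | hE
  · exact ⟨0, Subsingleton.elim _ _⟩
  obtain ⟨v, hv⟩ := exists_ne (0 : E)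
  have hvv : ⟪v, v⟫_𝕜 ≠ 0 := inner_self_ne_zero.mpr hv
  refine ⟨⟪v, c v⟫_𝕜 / ⟪v, v⟫_𝕜, ContinuousLinearMap.ext fun u => ?_⟩
  let T := (ContinuousLinearMap.toSpanSingleton 𝕜 u).comp (innerSL 𝕜 v)
  have hT : IsCompactOperator T := by
    rw [ContinuousLinearMap.coe_comp]
    exact (isCompactOperator_of_locallyCompactSpace_rng
      (ContinuousLinearMap.toSpanSingleton 𝕜 u)).comp_clm (innerSL 𝕜 v)
  have hTc : ⟪v, c v⟫_𝕜 • u = ⟪v, v⟫_𝕜 • c u := by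
    simpa [T] using congr($(hc T hT) v)
  change c u = (⟪v, c v⟫_𝕜 / ⟪v, v⟫_𝕜) • u
  rw [div_eq_inv_mul, mul_smul, hTc, inv_smul_smul₀ hvv]

theorem Orthonormal.not_isCompactOperator_sub_smul_one {ι : Type*} {e : ι → E}
    (he : Orthonormal 𝕜 e) {s : Set ι} (hs : s.Infinite) (hsc : sᶜ.Infinite) {P : E →L[𝕜] E}
    (hP : ∀ i, P (e i) = s.indicator e i) (μ : 𝕜) :
    ¬ IsCompactOperator (P - μ • 1 : E →L[𝕜] E) := by
  intro hx
  have : Infinite s := hs.to_subtype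
  have : Infinite ↥sᶜ := hsc.to_subtype
  have h₁ : 1 - μ = 0 := hx.eq_zero_of_orthonormal_eigenvectors
    (he.comp ((↑) : s → ι) Subtype.val_injective)
    fun i => by simp [hP, sub_smul]
  have h₂ : -μ = 0 := hx.eq_zero_of_orthonormal_eigenvectors
    (he.comp ((↑) : ↥sᶜ → ι) Subtype.val_injective)
    fun i => by simp [hP, Set.indicator_of_notMem i.2]
  exact one_ne_zero (by linear_combination h₁ - h₂ : (1 : 𝕜) = 0)

end InnerProductSpace

theorem norm_mul_sub_mul_le {R : Type*} [NonUnitalSeminormedRing R] (a b : R) :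
    ‖a * b - b * a‖ ≤ 2 * ‖b‖ * ‖a‖ :=
  calc ‖a * b - b * a‖ ≤ ‖a‖ * ‖b‖ + ‖b‖ * ‖a‖ :=
        (norm_sub_le _ _).trans (add_le_add (norm_mul_le _ _) (norm_mul_le _ _))
    _ = 2 * ‖b‖ * ‖a‖ := by ring

theorem exists_outer_derivation_on_compact_operators_general
    (H : Type*) [NormedAddCommGroup H] [InnerProductSpace ℂ H] [CompleteSpace H]
    (hinf : ¬ FiniteDimensional ℂ H) :
    ∃ D : (H →L[ℂ] H) → (H →L[ℂ] H),
      (∀ S T : H →L[ℂ] H, IsCompactOperator ⇑S → IsCompactOperator ⇑T →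
        D (S + T) = D S + D T) ∧
      (∀ (c : ℂ) (T : H →L[ℂ] H), IsCompactOperator ⇑T → D (c • T) = c • D T) ∧
      (∃ C : ℝ, ∀ T : H →L[ℂ] H, IsCompactOperator ⇑T → ‖D T‖ ≤ C * ‖T‖) ∧
      (∀ S T : H →L[ℂ] H, IsCompactOperator ⇑S → IsCompactOperator ⇑T →
        D (S * T) = S * D T + D S * T) ∧
      (∀ T : H →L[ℂ] H, IsCompactOperator ⇑T → IsCompactOperator ⇑(D T)) ∧
      (∀ x : H →L[ℂ] H, IsCompactOperator ⇑x →
        ∃ T : H →L[ℂ] H, IsCompactOperator ⇑T ∧ D T ≠ T * x - x * T) := by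
  obtain ⟨e, he⟩ := exists_orthonormal_nat_of_not_finiteDimensional hinf
  let s : Set ℕ := {n | Even n}
  have hs : s.Infinite := Nat.frequently_atTop_iff_infinite.mp Nat.frequently_even
  have hsc : sᶜ.Infinite := Nat.frequently_atTop_iff_infinite.mp
    (Nat.frequently_odd.mono fun _ => Nat.not_even_iff_odd.mpr)
  obtain ⟨P, hP⟩ := he.exists_clm_apply_eq_indicator s
  refine ⟨fun T => T * P - P * T, fun S T _ _ => by noncomm_ring,
    fun c T _ => by simp only [smul_sub, smul_mul_assoc, mul_smul_comm],
    ⟨2 * ‖P‖, fun T _ => norm_mul_sub_mul_le T P⟩, fun S T _ _ => by noncomm_ring,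
    fun T hT => (hT.comp_clm P).sub (hT.clm_comp P), fun x hx => ?_⟩
  by_contra! hinner
  obtain ⟨μ, hμ⟩ : ∃ μ : ℂ, P - x = μ • 1 :=
    exists_eq_smul_one_of_forall_commute_isCompactOperator fun T hT => by
      rw [Commute, SemiconjBy, mul_sub, sub_mul, sub_eq_sub_iff_sub_eq_sub]
      exact hinner T hT
  rw [← sub_sub_cancel P x, hμ] at hx
  exact he.not_isCompactOperator_sub_smul_one hs hsc hP μ hx

/-- On a separable infinite-dimensional complex Hilbert space `H` there exists a bounded
derivation `D : K(H) → K(H)` that is not inner in `K(H)`: for every compact operator `x`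
there is a compact `T` with `D T ≠ T * x - x * T`. -/
theorem exists_outer_derivation_on_compact_operators
    (H : Type*) [NormedAddCommGroup H] [InnerProductSpace ℂ H] [CompleteSpace H]
    [TopologicalSpace.SeparableSpace H] (hinf : ¬ FiniteDimensional ℂ H) :
    ∃ D : (H →L[ℂ] H) → (H →L[ℂ] H),
      (∀ S T : H →L[ℂ] H, IsCompactOperator ⇑S → IsCompactOperator ⇑T →
        D (S + T) = D S + D T) ∧
      (∀ (c : ℂ) (T : H →L[ℂ] H), IsCompactOperator ⇑T → D (c • T) = c • D T) ∧
      (∃ C : ℝ, ∀ T : H →L[ℂ] H, IsCompactOperator ⇑T → ‖D T‖ ≤ C * ‖T‖) ∧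
      (∀ S T : H →L[ℂ] H, IsCompactOperator ⇑S → IsCompactOperator ⇑T →
        D (S * T) = S * D T + D S * T) ∧
      (∀ T : H →L[ℂ] H, IsCompactOperator ⇑T → IsCompactOperator ⇑(D T)) ∧
      (∀ x : H →L[ℂ] H, IsCompactOperator ⇑x →
        ∃ T : H →L[ℂ] H, IsCompactOperator ⇑T ∧ D T ≠ T * x - x * T) :=
  exists_outer_derivation_on_compact_operators_general H hinf
end

section
/- Let H be a separable infinite-dimensional complex Hilbert space and let S ∈ B(H) be a bounded operator such that the commutator [S, T] = ST − TS is a finite-rank operator for every compact operator T ∈ K(H). Then there exists a uniform integer R ≥ 0 such that rank([S, T]) ≤ R for all T ∈ K(H). -/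
/-!
The sets `{T compact | rank [S, T] ≤ n}` are closed, because rank is lower semicontinuous on
operators, and by hypothesis they cover the Banach space of compact operators. By Baire one of
them contains a ball around some `X`. Every compact `T` then has a nonzero multiple `c • T` with
`X + c • T` in that ball, and `[S, c • T] = [S, X + c • T] - [S, X]` has rank at most `2n`.
-/

def IsFiniteRank {H : Type*} [NormedAddCommGroup H] [InnerProductSpace ℂ H]
    (T : H →L[ℂ] H) : Prop :=
  FiniteDimensional ℂ (LinearMap.range (T : H →ₗ[ℂ] H))

open Filter Topology

theorem LinearMap.rank_sub_le {K V V' : Type*} [DivisionRing K] [AddCommGroup V] [Module K V]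
    [AddCommGroup V'] [Module K V'] (f g : V →ₗ[K] V') : rank (f - g) ≤ rank f + rank g := by
  rw [sub_eq_add_neg]
  exact (rank_add_le f (-g)).trans_eq (by rw [rank, rank, range_neg])

namespace ContinuousLinearMap

variable {𝕜 E F : Type*} [NontriviallyNormedField 𝕜] [CompleteSpace 𝕜]
  [NormedAddCommGroup E] [NormedSpace 𝕜 E] [NormedAddCommGroup F] [NormedSpace 𝕜 F]

theorem isClosed_setOf_rank_le (n : ℕ) :
    IsClosed {f : E →L[𝕜] F | (f : E →ₗ[𝕜] F).rank ≤ n} := by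
  simpa only [← isOpen_compl_iff, Set.compl_ofPred, not_le, Nat.cast_add, Nat.cast_one,
    Cardinal.natCast_add_one_le_iff] using
    isOpen_setOfPred_nat_le_rank (𝕜 := 𝕜) (E := E) (F := F) (n + 1)

theorem exists_forall_rank_le_of_finiteDimensional_range {V : Type*} [NormedAddCommGroup V]
    [NormedSpace 𝕜 V] [CompleteSpace V] (φ : V →L[𝕜] E →L[𝕜] F)
    (hφ : ∀ v, FiniteDimensional 𝕜 (LinearMap.range (φ v : E →ₗ[𝕜] F))) :
    ∃ R : ℕ, ∀ v, (φ v : E →ₗ[𝕜] F).rank ≤ R := by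
  set A : ℕ → Set V := fun n ↦ φ ⁻¹' {f | (f : E →ₗ[𝕜] F).rank ≤ n}
  have hA_closed (n : ℕ) : IsClosed (A n) :=
    (isClosed_setOf_rank_le n).preimage φ.continuous
  have hA_cover : ⋃ n, A n = Set.univ := by
    refine Set.iUnion_eq_univ_iff.2 fun v ↦ ?_
    have := hφ v
    obtain ⟨n, hn⟩ := Cardinal.lt_aleph0.1 (Module.rank_lt_aleph0 𝕜 (φ v : E →ₗ[𝕜] F).range)
    exact ⟨n, hn.le⟩
  obtain ⟨n, x, hx⟩ := nonempty_interior_of_iUnion_of_closed hA_closed hA_cover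
  have hxA : x ∈ A n := interior_subset hx
  refine ⟨n + n, fun v ↦ ?_⟩
  have hline : Tendsto (fun c : 𝕜 ↦ x + c • v) (𝓝[≠] 0) (𝓝 x) :=
    tendsto_nhdsWithin_of_tendsto_nhds <|
      (by fun_prop : Continuous fun c : 𝕜 ↦ x + c • v).tendsto' 0 x (by simp)
  obtain ⟨c, hcA, hc⟩ :=
    ((hline.eventually (mem_interior_iff_mem_nhds.1 hx)).and self_mem_nhdsWithin).exists
  calc (φ v : E →ₗ[𝕜] F).rank = (c • (φ v : E →ₗ[𝕜] F)).rank := by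
        rw [LinearMap.rank, LinearMap.rank, LinearMap.range_smul _ _ hc]
    _ = ((φ (x + c • v) : E →ₗ[𝕜] F) - φ x).rank := by simp
    _ ≤ (φ (x + c • v) : E →ₗ[𝕜] F).rank + (φ x : E →ₗ[𝕜] F).rank := LinearMap.rank_sub_le _ _
    _ ≤ n + n := add_le_add hcA hxA
    _ = (n + n : ℕ) := (Nat.cast_add n n).symm

end ContinuousLinearMap

theorem uniform_rank_bound_of_finite_rank_commutators_general
    (H : Type*) [NormedAddCommGroup H] [InnerProductSpace ℂ H] [CompleteSpace H]
    (S : H →L[ℂ] H)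
    (hS : ∀ T : H →L[ℂ] H, IsCompactOperator ⇑T → IsFiniteRank (S * T - T * S)) :
    ∃ R : ℕ, ∀ T : H →L[ℂ] H, IsCompactOperator ⇑T →
      LinearMap.rank ((S * T - T * S : H →L[ℂ] H) : H →ₗ[ℂ] H) ≤ (R : Cardinal) := by
  let K := compactOperator (RingHom.id ℂ) H H
  have : CompleteSpace K := isClosed_setOfPred_isCompactOperator.completeSpace_coe
  let commutator : K →L[ℂ] H →L[ℂ] H :=
    (ContinuousLinearMap.mul ℂ _ S - (ContinuousLinearMap.mul ℂ _).flip S).comp K.subtypeL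
  obtain ⟨R, hR⟩ := commutator.exists_forall_rank_le_of_finiteDimensional_range
    fun T ↦ hS T T.2
  exact ⟨R, fun T hT ↦ hR ⟨T, hT⟩⟩

/-- If `S ∈ B(H)` has finite-rank commutator with every compact operator, then there is a
uniform integer `R` bounding the ranks of all these commutators. -/
theorem uniform_rank_bound_of_finite_rank_commutators
    (H : Type*) [NormedAddCommGroup H] [InnerProductSpace ℂ H] [CompleteSpace H]
    [TopologicalSpace.SeparableSpace H] (hinf : ¬ FiniteDimensional ℂ H)
    (S : H →L[ℂ] H)
    (hS : ∀ T : H →L[ℂ] H, IsCompactOperator ⇑T → IsFiniteRank (S * T - T * S)) :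
    ∃ R : ℕ, ∀ T : H →L[ℂ] H, IsCompactOperator ⇑T →
      LinearMap.rank ((S * T - T * S : H →L[ℂ] H) : H →ₗ[ℂ] H) ≤ (R : Cardinal) :=
  uniform_rank_bound_of_finite_rank_commutators_general H S hS
end

section
/- Let H be a complex Hilbert space, R ≥ 0 an integer, and (T_α) a net of bounded operators on H converging to X ∈ B(H) in the weak operator topology. If rank(T_α) ≤ R for every α, then rank(X) ≤ R. -/
open Filter Topology Matrix
open scoped InnerProductSpace

/-!
If `rank X > R`, choose `ξ₀, …, ξ_R` with `X ξ₀, …, X ξ_R` linearly independent. The matrices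
`(⟪X ξᵢ, T_α ξⱼ⟫)ᵢⱼ` are singular, since the `T_α ξⱼ` are `R + 1` vectors in a space of dimension
at most `R`; by weak operator convergence they tend entrywise to the Gram matrix of the `X ξᵢ`,
which is invertible. This contradicts the continuity of the determinant.
-/

theorem Matrix.det_inner_eq_zero_of_not_linearIndependent {𝕜 E κ : Type*} [RCLike 𝕜]
    [SeminormedAddCommGroup E] [InnerProductSpace 𝕜 E] [Fintype κ] [DecidableEq κ]
    (u w : κ → E) (hw : ¬LinearIndependent 𝕜 w) :
    (of fun i j => ⟪u i, w j⟫_𝕜).det = 0 := by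
  obtain ⟨c, hc, j, hj⟩ := Fintype.not_linearIndependent_iff.mp hw
  refine exists_mulVec_eq_zero_iff.mp ⟨c, fun h => hj (congrFun h j), funext fun i => ?_⟩
  simp [mulVec, dotProduct, mul_comm, ← inner_smul_right, ← inner_sum, hc]

namespace LinearMap

variable {K V V' : Type*} [DivisionRing K] [AddCommGroup V] [Module K V] [AddCommGroup V']
  [Module K V']

theorem card_le_rank_of_linearIndependent_comp {ι : Type*} [Fintype ι] (f : V →ₗ[K] V')
    {v : ι → V} (hv : LinearIndependent K (f ∘ v)) : (Fintype.card ι : Cardinal) ≤ f.rank := by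
  have hrange : LinearIndependent K fun i => (⟨f (v i), mem_range_self f _⟩ : range f) :=
    .of_comp (range f).subtype hv
  simpa using hrange.cardinal_lift_le_rank

theorem exists_linearIndependent_comp_of_le_rank {n : ℕ} (f : V →ₗ[K] V')
    (hn : (n : Cardinal) ≤ f.rank) : ∃ v : Fin n → V, LinearIndependent K (f ∘ v) := by
  obtain ⟨s, rfl, hs⟩ := le_rank_iff_exists_linearIndependent_finset.mp hn
  exact ⟨fun i => s.equivFin.symm i, hs.comp _ s.equivFin.symm.injective⟩

end LinearMap

theorem rank_le_of_wot_limit_general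
    (H : Type*) [NormedAddCommGroup H] [InnerProductSpace ℂ H]
    (R : ℕ) {ι : Type*} (l : Filter ι) [l.NeBot]
    (T : ι → (H →L[ℂ] H)) (X : H →L[ℂ] H)
    (hconv : ∀ ξ η : H, Tendsto (fun α => ⟪η, T α ξ⟫_ℂ) l (𝓝 ⟪η, X ξ⟫_ℂ))
    (hrank : ∀ α, LinearMap.rank ((T α : H →L[ℂ] H) : H →ₗ[ℂ] H) ≤ (R : Cardinal)) :
    LinearMap.rank ((X : H →L[ℂ] H) : H →ₗ[ℂ] H) ≤ (R : Cardinal) := by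
  by_contra! hlt
  obtain ⟨ξ, hξ⟩ :=
    LinearMap.exists_linearIndependent_comp_of_le_rank (n := R + 1) (X : H →ₗ[ℂ] H)
      (by simpa [← Cardinal.succ_natCast] using Order.succ_le_of_lt hlt)
  set M : ι → Matrix (Fin (R + 1)) (Fin (R + 1)) ℂ :=
    fun α => of fun i j => ⟪X (ξ i), T α (ξ j)⟫_ℂ
  have hM : Tendsto M l (𝓝 (gram ℂ (X ∘ ξ))) :=
    tendsto_pi_nhds.mpr fun i => tendsto_pi_nhds.mpr fun j => hconv (ξ j) (X (ξ i))
  have hdetM : ∀ α, (M α).det = 0 := fun α =>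
    det_inner_eq_zero_of_not_linearIndependent _ _ fun hT => by
      have := ((T α : H →ₗ[ℂ] H).card_le_rank_of_linearIndependent_comp hT).trans (hrank α)
      simp at this
  have hdet : Tendsto (fun α => (M α).det) l (𝓝 (gram ℂ (X ∘ ξ)).det) :=
    (continuous_id.matrix_det.tendsto _).comp hM
  exact det_gram_ne_zero_iff_linearIndependent.mpr hξ (tendsto_nhds_unique hdet (by simp [hdetM]))

/-- If a net `(T_α)` of bounded operators on a complex Hilbert space converges to `X` in the
weak operator topology and `rank (T_α) ≤ R` for every `α`, then `rank X ≤ R`. -/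
theorem rank_le_of_wot_limit
    (H : Type*) [NormedAddCommGroup H] [InnerProductSpace ℂ H] [CompleteSpace H]
    (R : ℕ) {ι : Type*} (l : Filter ι) [l.NeBot]
    (T : ι → (H →L[ℂ] H)) (X : H →L[ℂ] H)
    (hconv : ∀ ξ η : H, Tendsto (fun α => ⟪η, T α ξ⟫_ℂ) l (𝓝 ⟪η, X ξ⟫_ℂ))
    (hrank : ∀ α, LinearMap.rank ((T α : H →L[ℂ] H) : H →ₗ[ℂ] H) ≤ (R : Cardinal)) :
    LinearMap.rank ((X : H →L[ℂ] H) : H →ₗ[ℂ] H) ≤ (R : Cardinal) :=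
  rank_le_of_wot_limit_general H R l T X hconv hrank
end

section
/- Let H be a separable complex Hilbert space, K a compact self-adjoint operator on H, and (e_{n_k})_{k≥1} an orthonormal sequence of eigenvectors of K with real eigenvalues λ_{n_k} satisfying λ_{n_k} ≠ λ_{n_{k+1}} for all k. Define the compact operator T = Σ_{k=1}^∞ (1/k) e_{n_k} ⊗ e_{n_{k+1}}* (so T e_{n_{k+1}} = (1/k) e_{n_k} and T vanishes on the orthogonal complement of span{e_{n_{k+1}} : k ≥ 1}). Then [K, T] e_{n_{k+1}} = (1/k)(λ_{n_k} − λ_{n_{k+1}}) e_{n_k} for every k, and consequently the commutator [K, T] has infinite rank. -/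
/-- Let `K` be a compact self-adjoint operator on a separable complex Hilbert space with an
orthonormal sequence of eigenvectors `e k` (for `k = 1, 2, …`, here indexed by `k+1` with
`k : ℕ`) and real eigenvalues `lam k` satisfying `lam k ≠ lam (k+1)`.  If `T` is the compact
weighted shift with `T (e (k+1)) = (1/(k+1)) • e k`, then
`[K, T] (e (k+1)) = (1/(k+1)) * (lam k - lam (k+1)) • e k` for every `k`, and `[K, T]`
has infinite rank. -/
theorem weighted_shift_commutator_infinite_rank
    (H : Type*) [NormedAddCommGroup H] [InnerProductSpace ℂ H] [CompleteSpace H]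
    [TopologicalSpace.SeparableSpace H]
    (K : H →L[ℂ] H) (hKcompact : IsCompactOperator ⇑K) (hKsa : IsSelfAdjoint K)
    (e : ℕ → H) (he : Orthonormal ℂ e)
    (lam : ℕ → ℝ) (heig : ∀ k, K (e k) = (lam k : ℂ) • e k)
    (hne : ∀ k, lam k ≠ lam (k + 1))
    (T : H →L[ℂ] H) (hTcompact : IsCompactOperator ⇑T)
    (hT : ∀ k : ℕ, T (e (k + 1)) = ((k + 1 : ℂ))⁻¹ • e k) :
    (∀ k : ℕ, (K * T - T * K) (e (k + 1)) =
      (((k + 1 : ℂ))⁻¹ * ((lam k : ℂ) - (lam (k + 1) : ℂ))) • e k) ∧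
      ¬ IsFiniteRank (K * T - T * K) := by
  have hcomm : ∀ k : ℕ, (K * T - T * K) (e (k + 1)) =
      (((k + 1 : ℂ))⁻¹ * ((lam k : ℂ) - (lam (k + 1) : ℂ))) • e k := by
    intro k
    have : (K * T - T * K) (e (k + 1)) = K (T (e (k + 1))) - T (K (e (k + 1))) := rfl
    rw [this, hT k, heig (k + 1), map_smul, map_smul, heig k, hT k, smul_smul, smul_smul,
      ← sub_smul]
    ring_nf
  refine ⟨hcomm, ?_⟩
  intro hfin
  have hmem : ∀ k : ℕ, e k ∈ LinearMap.range ((K * T - T * K : H →L[ℂ] H) : H →ₗ[ℂ] H) := by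
    intro k
    have hc : (((k + 1 : ℂ))⁻¹ * ((lam k : ℂ) - (lam (k + 1) : ℂ))) ≠ 0 := by
      refine mul_ne_zero (inv_ne_zero ?_) ?_
      · exact Nat.cast_add_one_ne_zero k
      · intro h
        apply hne k
        have := sub_eq_zero.mp h
        exact_mod_cast this
    refine ⟨(((k + 1 : ℂ))⁻¹ * ((lam k : ℂ) - (lam (k + 1) : ℂ)))⁻¹ • e (k + 1), ?_⟩
    simp only [LinearMap.map_smul]
    rw [ContinuousLinearMap.coe_coe, hcomm k, smul_smul, inv_mul_cancel₀ hc, one_smul]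
  have hli : LinearIndependent ℂ
      (fun k : ℕ => (⟨e k, hmem k⟩ : LinearMap.range ((K * T - T * K : H →L[ℂ] H) : H →ₗ[ℂ] H))) := by
    apply LinearIndependent.of_comp (LinearMap.range ((K * T - T * K : H →L[ℂ] H) : H →ₗ[ℂ] H)).subtype
    exact he.linearIndependent
  have : Module.Finite ℂ (LinearMap.range ((K * T - T * K : H →L[ℂ] H) : H →ₗ[ℂ] H)) := hfin
  exact Module.Finite.not_linearIndependent_of_infinite _ hli
end

section
/- Let H be a separable infinite-dimensional complex Hilbert space and let S ∈ B(H) satisfy [S, T] ∈ F(H) for every compact operator T ∈ K(H). Then S ∈ ℂ·I_H + F(H), i.e., there exist a scalar c ∈ ℂ and a finite-rank operator K ∈ F(H) with S = c·I_H + K. -/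
/-!
If `S ∉ ℂ·I + F(H)`, then orthogonally to any finite-dimensional data there are `x, z` with
`⟪x, z⟫ = 1` and `⟪x, S z⟫ = 0`. Otherwise `z ∈ V + ℂ·S z` for all `z` in a subspace of finite
codimension; but two linear maps with `f v ∈ ℂ·g v` for all `v` are either proportional or `f` has
rank at most one, and either way `S ∈ ℂ·I + F(H)`. Inductively this yields `⟪x m, z n⟫ = δ m n`
and `⟪x m, S (z n)⟫ = 0`. For unit vectors `y n` with the `S (y n)` linearly independent,
`T = ∑ 2⁻ⁿ ⟪x n, ·⟫ y n` is compact with `T (z n) = 2⁻ⁿ y n` and `T (S (z n)) = 0`, so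
`[S, T] (z n) = 2⁻ⁿ S (y n)` and `[S, T]` has infinite rank.
-/

open Submodule
open scoped InnerProductSpace

theorem LinearIndependent.smul_of_ne_zero {ι K M : Type*} [Field K] [AddCommGroup M]
    [Module K M] {v : ι → M} (hv : LinearIndependent K v) {a : ι → K} (ha : ∀ i, a i ≠ 0) :
    LinearIndependent K fun i => a i • v i :=
  hv.units_smul fun i => Units.mk0 (a i) (ha i)

namespace LinearMap

variable {K V W : Type*} [Field K] [AddCommGroup V] [Module K V] [AddCommGroup W] [Module K W]
  {f g : V →ₗ[K] W}

theorem apply_eq_smul_of_forall_mem_span_singleton (h : ∀ v, f v ∈ K ∙ g v) {v₀ : V} {c : K}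
    (hv₀ : g v₀ ≠ 0) (hc : f v₀ = c • g v₀) {v : V} (hv : g v ∉ K ∙ g v₀) : f v = c • g v := by
  obtain ⟨a, ha⟩ := mem_span_singleton.mp (h v)
  obtain ⟨b, hb⟩ := mem_span_singleton.mp (h (v + v₀))
  have hab : (a - b) • g v = (b - c) • g v₀ := by
    rw [map_add, map_add, ← ha, hc] at hb
    linear_combination (norm := module) -hb
  obtain rfl : a = b := by
    by_contra hne
    refine hv (mem_span_singleton.mpr ⟨(a - b)⁻¹ * (b - c), ?_⟩)
    rw [mul_smul, ← hab, inv_smul_smul₀ (sub_ne_zero.mpr hne)]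
  obtain rfl : a = c := by
    rw [sub_self, zero_smul, eq_comm, smul_eq_zero] at hab
    exact sub_eq_zero.mp (hab.resolve_right hv₀)
  exact ha.symm

theorem exists_eq_smul_or_range_le_span_singleton (h : ∀ v, f v ∈ K ∙ g v) :
    (∃ c : K, f = c • g) ∨ ∃ w : W, range f ≤ K ∙ w := by
  by_cases hg : ∃ w, range g ≤ K ∙ w
  · obtain ⟨w, hw⟩ := hg
    refine .inr ⟨w, ?_⟩
    rintro _ ⟨v, rfl⟩
    exact (span_singleton_le_iff_mem _ _).mpr (hw (mem_range_self g v)) (h v)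
  · push Not at hg
    obtain ⟨_, ⟨v₀, rfl⟩, hv₀⟩ := SetLike.not_le_iff_exists.mp (hg 0)
    obtain ⟨_, ⟨u, rfl⟩, hu⟩ := SetLike.not_le_iff_exists.mp (hg (g v₀))
    rw [span_singleton_eq_bot.mpr rfl, mem_bot] at hv₀
    obtain ⟨c, hc⟩ := mem_span_singleton.mp (h v₀)
    have key : ∀ v, g v ∉ K ∙ g v₀ → f v = c • g v := fun _ =>
      apply_eq_smul_of_forall_mem_span_singleton h hv₀ hc.symm
    refine .inl ⟨c, ext fun v => ?_⟩
    by_cases hv : g v ∈ K ∙ g v₀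
    · -- `v = (v + u) - u` with both `v + u` and `u` off the line `K ∙ g v₀`
      have hvu : g (v + u) ∉ K ∙ g v₀ := fun h' => hu (by simpa using sub_mem h' hv)
      have := key _ hvu
      rw [map_add, map_add, key u hu, smul_add] at this
      simpa using this
    · exact key v hv

theorem range_le_map_sup {M N : Type*} [AddCommGroup M] [Module K M] [AddCommGroup N]
    [Module K N] (B : M →ₗ[K] N) {U W : Submodule K M} {V : Submodule K N} (hUW : U ⊔ W = ⊤)
    (hW : W.map B ≤ V) : range B ≤ U.map B ⊔ V := by
  rw [range_eq_map, ← hUW, Submodule.map_sup]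
  exact sup_le_sup_left hW _

theorem exists_linearIndependent_comp_of_not_finiteDimensional_range (f : V →ₗ[K] W)
    (hf : ¬ FiniteDimensional K (range f)) : ∃ y : ℕ → V, LinearIndependent K (f ∘ y) := by
  let b := Module.Basis.ofVectorSpace K (range f)
  have : Infinite (Module.Basis.ofVectorSpaceIndex K (range f)) := by
    by_contra! h
    exact hf (Module.Finite.of_basis b)
  let e := Infinite.natEmbedding (Module.Basis.ofVectorSpaceIndex K (range f))
  choose y hy using fun n => (b (e n)).2
  have : f ∘ y = (range f).subtype ∘ b ∘ e := funext hy
  exact ⟨y, this ▸ (b.linearIndependent.comp e e.injective).map' _ (ker_subtype _)⟩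

theorem not_linearIndependent_comp_of_finiteDimensional_range {ι : Type*} [Infinite ι]
    (f : V →ₗ[K] W) [FiniteDimensional K (range f)] (v : ι → V) :
    ¬ LinearIndependent K (f ∘ v) := fun h =>
  Module.Finite.not_linearIndependent_of_infinite
    (fun i => (⟨f (v i), mem_range_self f (v i)⟩ : range f)) (h.of_comp (range f).subtype)

end LinearMap

theorem Module.End.exists_finiteDimensional_range_sub_smul_one {K M : Type*} [Field K]
    [AddCommGroup M] [Module K M] {A : Module.End K M} {U V W : Submodule K M}
    [FiniteDimensional K U] [FiniteDimensional K V] (hUW : U ⊔ W = ⊤)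
    (h : ∀ z ∈ W, z ∈ V ⊔ K ∙ A z) :
    ∃ c : K, FiniteDimensional K (LinearMap.range (A - c • 1)) := by
  set π := V.mkQ
  have of_map_le : ∀ w, W.map π ≤ K ∙ w →
      ∃ c : K, FiniteDimensional K (LinearMap.range (A - c • 1)) := by
    intro w hw
    have : FiniteDimensional K (LinearMap.range π) :=
      Submodule.finiteDimensional_of_le (LinearMap.range_le_map_sup π hUW hw)
    have : FiniteDimensional K (M ⧸ V) := by
      rw [range_mkQ] at this
      exact Module.Finite.equiv topEquiv
    have := Module.Finite.of_submodule_quotient V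
    exact ⟨0, inferInstance⟩
  have hloc : ∀ z : W, (π ∘ₗ W.subtype) z ∈ K ∙ (π ∘ₗ A ∘ₗ W.subtype) z := by
    rintro ⟨z, hz⟩
    have := h z hz
    rwa [← comap_map_mkQ, mem_comap, map_span, Set.image_singleton] at this
  rcases LinearMap.exists_eq_smul_or_range_le_span_singleton hloc with ⟨c, hc⟩ | ⟨w, hw⟩
  · rcases eq_or_ne c 0 with rfl | hc0
    · refine of_map_le 0 ?_
      rintro _ ⟨z, hz, rfl⟩
      simpa using LinearMap.congr_fun hc ⟨z, hz⟩
    · refine ⟨c⁻¹, Submodule.finiteDimensional_of_le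
        (LinearMap.range_le_map_sup (V := V) _ hUW ?_)⟩
      rintro _ ⟨z, hz, rfl⟩
      have hzV : z - c • A z ∈ V := by
        rw [← Submodule.Quotient.eq]
        simpa [π] using LinearMap.congr_fun hc ⟨z, hz⟩
      convert V.smul_mem (-c⁻¹) hzV using 1
      simp [smul_sub, smul_smul, hc0]
      abel
  · exact of_map_le w (by rwa [LinearMap.range_comp, range_subtype] at hw)

section Normed

variable {𝕜 E F : Type*} [RCLike 𝕜] [NormedAddCommGroup E] [NormedSpace 𝕜 E]
  [NormedAddCommGroup F] [NormedSpace 𝕜 F]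

theorem exists_norm_eq_one_linearIndependent_apply (A : E →ₗ[𝕜] F)
    (hA : ¬ FiniteDimensional 𝕜 (LinearMap.range A)) :
    ∃ y : ℕ → E, (∀ n, ‖y n‖ = 1) ∧ LinearIndependent 𝕜 fun n => A (y n) := by
  obtain ⟨y, hy⟩ := A.exists_linearIndependent_comp_of_not_finiteDimensional_range hA
  have hy0 : ∀ n, y n ≠ 0 := fun n h => hy.ne_zero n (by simp [h])
  refine ⟨fun n => (‖y n‖⁻¹ : 𝕜) • y n, fun n => norm_smul_inv_norm (hy0 n), ?_⟩
  simp only [map_smul]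
  exact hy.smul_of_ne_zero fun n => by simpa using hy0 n

theorem ContinuousLinearMap.isCompactOperator_smulRight (f : E →L[𝕜] 𝕜) (y : F) :
    IsCompactOperator (f.smulRight y) := by
  have hid : IsCompactOperator (id : 𝕜 → 𝕜) :=
    (isCompactOperator_id_iff_finiteDimensional (𝕜 := 𝕜)).mpr inferInstance
  have : ⇑(f.smulRight y) = (1 : 𝕜 →L[𝕜] 𝕜).smulRight y ∘ id ∘ f := by
    ext
    simp
  exact this ▸ (hid.comp_clm f).clm_comp _

theorem isCompactOperator_tsum [CompleteSpace F] {ι : Type*} {T : ι → E →L[𝕜] F}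
    (hT : Summable T) (h : ∀ i, IsCompactOperator (T i)) : IsCompactOperator ⇑(∑' i, T i) :=
  isCompactOperator_of_tendsto hT.hasSum
    (.of_forall fun _ => (compactOperator (RingHom.id 𝕜) E F).sum_mem fun i _ => h i)

end Normed

section InnerProductSpace

variable {𝕜 E : Type*} [RCLike 𝕜] [NormedAddCommGroup E] [InnerProductSpace 𝕜 E]

theorem Submodule.exists_mem_orthogonal_norm_eq_one_inner_ne_zero {N : Submodule 𝕜 E}
    [N.HasOrthogonalProjection] {z : E} (hz : z ∉ N) : ∃ x ∈ Nᗮ, ‖x‖ = 1 ∧ ⟪x, z⟫_𝕜 ≠ 0 := by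
  obtain ⟨x, hx, hxz⟩ : ∃ x ∈ Nᗮ, ⟪x, z⟫_𝕜 ≠ 0 := by
    by_contra! h
    rw [← N.orthogonal_orthogonal] at hz
    exact hz ((mem_orthogonal _ _).mpr h)
  have hx0 : x ≠ 0 := by rintro rfl; simp at hxz
  refine ⟨(‖x‖⁻¹ : 𝕜) • x, Nᗮ.smul_mem _ hx, norm_smul_inv_norm hx0, ?_⟩
  rw [inner_smul_left]
  exact mul_ne_zero (by simpa using hx0) hxz

theorem exists_inner_eq_one_inner_apply_eq_zero {A : E →L[𝕜] E}
    (hA : ∀ c : 𝕜, ¬ FiniteDimensional 𝕜 (LinearMap.range ((A : E →ₗ[𝕜] E) - c • 1)))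
    (U V : Submodule 𝕜 E) [FiniteDimensional 𝕜 U] [FiniteDimensional 𝕜 V] :
    ∃ x ∈ Vᗮ, ∃ z ∈ Uᗮ, ‖x‖ = 1 ∧ ⟪x, z⟫_𝕜 = 1 ∧ ⟪x, A z⟫_𝕜 = 0 := by
  obtain ⟨z, hzU, hzN⟩ : ∃ z ∈ Uᗮ, z ∉ V ⊔ 𝕜 ∙ A z := by
    by_contra! h
    obtain ⟨c, hc⟩ := Module.End.exists_finiteDimensional_range_sub_smul_one
      U.sup_orthogonal_of_hasOrthogonalProjection h
    exact hA c hc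
  obtain ⟨x, hxN, hx1, hxz⟩ := exists_mem_orthogonal_norm_eq_one_inner_ne_zero hzN
  refine ⟨x, orthogonal_le le_sup_left hxN, (⟪x, z⟫_𝕜)⁻¹ • z, Uᗮ.smul_mem _ hzU, hx1, ?_, ?_⟩
  · rw [inner_smul_right, inv_mul_cancel₀ hxz]
  · rw [map_smul, inner_smul_right,
      inner_left_of_mem_orthogonal (mem_sup_right (mem_span_singleton_self _)) hxN, mul_zero]

theorem exists_seq_inner_eq_ite_inner_apply_eq_zero [CompleteSpace E] {A : E →L[𝕜] E}
    (hA : ∀ c : 𝕜, ¬ FiniteDimensional 𝕜 (LinearMap.range ((A : E →ₗ[𝕜] E) - c • 1))) :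
    ∃ x z : ℕ → E, (∀ n, ‖x n‖ = 1) ∧ (∀ m n, ⟪x m, z n⟫_𝕜 = if m = n then 1 else 0) ∧
      ∀ m n, ⟪x m, A (z n)⟫_𝕜 = 0 := by
  classical
  let P : E × E → Prop := fun p => ‖p.1‖ = 1 ∧ ⟪p.1, p.2⟫_𝕜 = 1 ∧ ⟪p.1, A p.2⟫_𝕜 = 0
  let r : E × E → E × E → Prop := fun p q =>
    (⟪p.1, q.2⟫_𝕜 = 0 ∧ ⟪p.1, A q.2⟫_𝕜 = 0) ∧ ⟪q.1, p.2⟫_𝕜 = 0 ∧ ⟪q.1, A p.2⟫_𝕜 = 0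
  have : Std.Symm r := ⟨fun _ _ h => ⟨h.2, h.1⟩⟩
  have mem_span {t : Finset E} {v : E} (hv : v ∈ t) : v ∈ span 𝕜 (t : Set E) := subset_span hv
  obtain ⟨f, hfP, hfr⟩ := exists_seq_of_forall_finset_exists' P r fun s _ => by
    obtain ⟨x, hxV, z, hzU, hP⟩ := exists_inner_eq_one_inner_apply_eq_zero hA
      (span 𝕜 ↑(s.image Prod.fst ∪ s.image fun p => ContinuousLinearMap.adjoint A p.1))
      (span 𝕜 ↑(s.image Prod.snd ∪ s.image fun p => A p.2))
    refine ⟨(x, z), hP, fun p hp => ⟨⟨?_, ?_⟩, ?_, ?_⟩⟩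
    · exact inner_right_of_mem_orthogonal
        (mem_span (Finset.mem_union_left _ (Finset.mem_image_of_mem _ hp))) hzU
    · rw [← ContinuousLinearMap.adjoint_inner_left]
      exact inner_right_of_mem_orthogonal
        (mem_span (Finset.mem_union_right _
          (Finset.mem_image_of_mem (fun p : E × E => ContinuousLinearMap.adjoint A p.1) hp))) hzU
    · exact inner_left_of_mem_orthogonal
        (mem_span (Finset.mem_union_left _ (Finset.mem_image_of_mem _ hp))) hxV
    · exact inner_left_of_mem_orthogonal
        (mem_span (Finset.mem_union_right _
          (Finset.mem_image_of_mem (fun p : E × E => A p.2) hp))) hxV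
  refine ⟨fun n => (f n).1, fun n => (f n).2, fun n => (hfP n).1, fun m n => ?_, fun m n => ?_⟩
  · split_ifs with h
    · exact h ▸ (hfP m).2.1
    · exact (hfr h).1.1
  · rcases eq_or_ne m n with rfl | h
    · exact (hfP m).2.2
    · exact (hfr h).1.2

theorem exists_isCompactOperator_apply_eq_smul [CompleteSpace E] {x z y : ℕ → E}
    (hx : ∀ n, ‖x n‖ ≤ 1) (hy : ∀ n, ‖y n‖ ≤ 1)
    (hxz : ∀ m n, ⟪x m, z n⟫_𝕜 = if m = n then 1 else 0) :
    ∃ T : E →L[𝕜] E, IsCompactOperator T ∧ (∀ n, T (z n) = (2⁻¹ : 𝕜) ^ n • y n) ∧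
      ∀ w, (∀ n, ⟪x n, w⟫_𝕜 = 0) → T w = 0 := by
  set t : ℕ → E →L[𝕜] E := fun n => (2⁻¹ : 𝕜) ^ n • (innerSL 𝕜 (x n)).smulRight (y n)
  have ht : Summable t := by
    refine Summable.of_norm_bounded summable_geometric_two fun n => ?_
    simp only [t, norm_smul, ContinuousLinearMap.norm_smulRight_apply, innerSL_apply_norm,
      norm_pow, norm_inv, RCLike.norm_two, one_div, inv_pow]
    exact mul_le_of_le_one_right (by positivity) (mul_le_one₀ (hx n) (norm_nonneg _) (hy n))
  have hT : ∀ w, (∑' n, t n) w = ∑' n, (2⁻¹ : 𝕜) ^ n • ⟪x n, w⟫_𝕜 • y n := fun w =>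
    (ContinuousLinearMap.apply 𝕜 E w).map_tsum ht
  refine ⟨∑' n, t n, isCompactOperator_tsum ht fun n =>
    (ContinuousLinearMap.isCompactOperator_smulRight _ _).smul _, fun n => ?_, fun w hw => ?_⟩
  · simp [hT, hxz]
  · simp [hT, hw]

end InnerProductSpace

theorem scalar_plus_finite_rank_of_finite_rank_commutators_general
    (H : Type*) [NormedAddCommGroup H] [InnerProductSpace ℂ H] [CompleteSpace H]
    (S : H →L[ℂ] H)
    (hS : ∀ T : H →L[ℂ] H, IsCompactOperator ⇑T → IsFiniteRank (S * T - T * S)) :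
    ∃ (c : ℂ) (K : H →L[ℂ] H), IsFiniteRank K ∧ S = c • (1 : H →L[ℂ] H) + K := by
  by_contra! hS_far
  have hA : ∀ c : ℂ, ¬ FiniteDimensional ℂ (LinearMap.range ((S : H →ₗ[ℂ] H) - c • 1)) :=
    fun c hc => hS_far c (S - c • 1) hc (by abel)
  obtain ⟨y, hy, hSy⟩ :=
    exists_norm_eq_one_linearIndependent_apply (S : H →ₗ[ℂ] H) fun h => hS_far 0 S h (by simp)
  obtain ⟨x, z, hx, hxz, hxSz⟩ := exists_seq_inner_eq_ite_inner_apply_eq_zero hA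
  obtain ⟨T, hT, hTz, hT_zero⟩ :=
    exists_isCompactOperator_apply_eq_smul (fun n => (hx n).le) (fun n => (hy n).le) hxz
  have hD : ⇑(S * T - T * S) ∘ z = fun n => (2⁻¹ : ℂ) ^ n • S (y n) :=
    funext fun n => by simp [hTz, hT_zero _ fun m => hxSz m n]
  have : FiniteDimensional ℂ (LinearMap.range ((S * T - T * S : H →L[ℂ] H) : H →ₗ[ℂ] H)) :=
    hS T hT
  exact LinearMap.not_linearIndependent_comp_of_finiteDimensional_range _ z
    (hD ▸ hSy.smul_of_ne_zero fun n => by simp)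

/-- If `S ∈ B(H)` has finite-rank commutator with every compact operator on a separable
infinite-dimensional complex Hilbert space, then `S ∈ ℂ·I + F(H)`: there exist `c : ℂ` and a
finite-rank operator `K` with `S = c • 1 + K`. -/
theorem scalar_plus_finite_rank_of_finite_rank_commutators
    (H : Type*) [NormedAddCommGroup H] [InnerProductSpace ℂ H] [CompleteSpace H]
    [TopologicalSpace.SeparableSpace H] (hinf : ¬ FiniteDimensional ℂ H)
    (S : H →L[ℂ] H)
    (hS : ∀ T : H →L[ℂ] H, IsCompactOperator ⇑T → IsFiniteRank (S * T - T * S)) :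
    ∃ (c : ℂ) (K : H →L[ℂ] H), IsFiniteRank K ∧ S = c • (1 : H →L[ℂ] H) + K :=
  scalar_plus_finite_rank_of_finite_rank_commutators_general H S hS
end

section
/- Let H be a separable infinite-dimensional complex Hilbert space, 1 ≤ p < ∞, and S ∈ B(H) such that there is a constant C > 0 with [S, T] ∈ S_p(H) and ‖[S, T]‖_p ≤ C‖T‖ for every compact operator T ∈ K(H). Then [S, X] ∈ S_p(H) and ‖[S, X]‖_p ≤ C‖X‖ for every bounded operator X ∈ B(H). -/
noncomputable section

variable {H : Type*} [NormedAddCommGroup H] [InnerProductSpace ℂ H]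

/-- The `n`-th singular value (approximation number) of a bounded operator on a Hilbert
space: the distance of `T` to the operators of rank at most `n`. -/
def singularValue (T : H →L[ℂ] H) (n : ℕ) : ℝ :=
  sInf ((fun F : H →L[ℂ] H => ‖T - F‖) ''
    {F : H →L[ℂ] H | LinearMap.rank (F : H →ₗ[ℂ] H) ≤ (n : Cardinal)})

/-- Membership in the Schatten `p`-class `S_p(H)`: a compact operator whose singular values
are `p`-summable. -/
def MemSchatten (p : ℝ) (T : H →L[ℂ] H) : Prop :=
  IsCompactOperator ⇑T ∧ Summable (fun n : ℕ => singularValue T n ^ p)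

/-- The Schatten `p`-norm `‖T‖_p = (∑ₙ sₙ(T)^p)^(1/p)`. -/
def schattenNorm (p : ℝ) (T : H →L[ℂ] H) : ℝ :=
  (∑' n : ℕ, singularValue T n ^ p) ^ (1 / p)

end

/-! Compress `X` to `Xₙ = Pₙ X Pₙ`, where the `Pₙ` are finite-rank orthogonal projections
increasing strongly to the identity. Each `Xₙ` is compact with `‖Xₙ‖ ≤ ‖X‖`, so
`[S, Xₙ]` lies in the `S_p`-ball of radius `C‖X‖`, and `[S, Xₙ] → [S, X]` in the weak operator
topology. That ball is weakly closed: along an ultrafilter, a near-optimal rank-`k`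
approximant of `[S, Xₙ]` has a weak limit of rank at most `k` (write it as a sum of `k` rank-one
operators and take weak limits of the vectors), and the operator norm is weakly lower
semicontinuous, so `sₖ([S, X]) ≤ lim sₖ([S, Xₙ])` for every `k`. -/

open Filter Topology InnerProductSpace

section SingularValue

variable {H : Type*} [NormedAddCommGroup H] [InnerProductSpace ℂ H]

lemma singularValue_le_norm_sub {T F : H →L[ℂ] H} {n : ℕ}
    (hF : LinearMap.rank (F : H →ₗ[ℂ] H) ≤ n) : singularValue T n ≤ ‖T - F‖ :=
  csInf_le ⟨0, by rintro _ ⟨G, -, rfl⟩; exact norm_nonneg _⟩ ⟨F, hF, rfl⟩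

lemma singularValue_le_norm (T : H →L[ℂ] H) (n : ℕ) : singularValue T n ≤ ‖T‖ := by
  simpa using singularValue_le_norm_sub (T := T) (F := 0) (n := n) (by simp)

lemma exists_rank_le_norm_sub_lt (T : H →L[ℂ] H) (n : ℕ) {ε : ℝ} (hε : 0 < ε) :
    ∃ F : H →L[ℂ] H, LinearMap.rank (F : H →ₗ[ℂ] H) ≤ n ∧ ‖T - F‖ < singularValue T n + ε := by
  obtain ⟨_, ⟨F, hF, rfl⟩, hlt⟩ := exists_lt_of_csInf_lt (Set.image_nonempty.2 ⟨0, by simp⟩)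
    (lt_add_of_pos_right (singularValue T n) hε)
  exact ⟨F, hF, hlt⟩

lemma singularValue_nonneg (T : H →L[ℂ] H) (n : ℕ) : 0 ≤ singularValue T n :=
  le_of_forall_pos_le_add fun ε hε => by
    obtain ⟨F, -, hF⟩ := exists_rank_le_norm_sub_lt T n hε
    linarith [norm_nonneg (T - F)]

lemma singularValue_zero (T : H →L[ℂ] H) : singularValue T 0 = ‖T‖ := by
  refine le_antisymm (singularValue_le_norm T 0)
    (le_csInf (Set.image_nonempty.2 ⟨0, by simp⟩) ?_)
  rintro _ ⟨F, hF, rfl⟩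
  have : F = 0 := ContinuousLinearMap.coe_injective (by simpa [LinearMap.range_eq_bot] using hF)
  simp [this]

end SingularValue

section Compact

variable {𝕜 E F : Type*} [NontriviallyNormedField 𝕜] [ProperSpace 𝕜]
  [NormedAddCommGroup E] [NormedSpace 𝕜 E] [NormedAddCommGroup F] [NormedSpace 𝕜 F]

lemma ContinuousLinearMap.isCompactOperator_of_forall_mem (T : E →L[𝕜] F) {W : Submodule 𝕜 F}
    [FiniteDimensional 𝕜 W] (hT : ∀ x, T x ∈ W) : IsCompactOperator T :=
  have := FiniteDimensional.proper 𝕜 W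
  (isCompactOperator_of_locallyCompactSpace_dom (T.codRestrict W hT)).clm_comp W.subtypeL

lemma ContinuousLinearMap.isCompactOperator_of_rank_le (T : E →L[𝕜] F) {n : ℕ}
    (hT : LinearMap.rank (T : E →ₗ[𝕜] F) ≤ n) : IsCompactOperator T :=
  have : FiniteDimensional 𝕜 (LinearMap.range (T : E →ₗ[𝕜] F)) :=
    Module.rank_lt_aleph0_iff.mp (hT.trans_lt (Cardinal.natCast_lt_aleph0))
  T.isCompactOperator_of_forall_mem (LinearMap.mem_range_self (T : E →ₗ[𝕜] F))

end Compact

section FiniteRank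

variable {𝕜 E : Type*} [RCLike 𝕜] [NormedAddCommGroup E] [InnerProductSpace 𝕜 E]

/-- Banach–Alaoglu in the dual, transported back to `E` by the Riesz isomorphism. -/
lemma exists_forall_tendsto_inner_of_norm_le [CompleteSpace E] {ι : Type*} (𝒰 : Ultrafilter ι)
    {w : ι → E} {M : ℝ} (hw : ∀ i, ‖w i‖ ≤ M) :
    ∃ z : E, ∀ y, Tendsto (fun i => ⟪w i, y⟫_𝕜) 𝒰 (𝓝 ⟪z, y⟫_𝕜) := by
  let φ : ι → WeakDual 𝕜 E := fun i => StrongDual.toWeakDual (toDual 𝕜 E (w i))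
  have hφ : (𝒰.map φ : Filter (WeakDual 𝕜 E)) ≤
      𝓟 (WeakDual.toStrongDual ⁻¹' Metric.closedBall (0 : StrongDual 𝕜 E) M) := by
    rw [Ultrafilter.coe_map, Filter.le_principal_iff, Filter.mem_map]
    exact Filter.Eventually.of_forall fun i => by simpa [φ] using hw i
  obtain ⟨ψ, -, hψ⟩ := (WeakDual.isCompact_closedBall 0 M).ultrafilter_le_nhds _ hφ
  refine ⟨(toDual 𝕜 E).symm (WeakDual.toStrongDual ψ), fun y => ?_⟩
  simpa [φ, Function.comp_def, toDual_apply_apply] using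
    ((WeakDual.eval_continuous y).tendsto ψ).comp hψ

lemma rank_sum_rankOne_le {k : ℕ} (u v : Fin k → E) :
    LinearMap.rank ((∑ j, rankOne 𝕜 (u j) (v j) : E →L[𝕜] E) : E →ₗ[𝕜] E) ≤ k := by
  classical
  have hrange : LinearMap.range ((∑ j, rankOne 𝕜 (u j) (v j) : E →L[𝕜] E) : E →ₗ[𝕜] E)
      ≤ Submodule.span 𝕜 (Finset.univ.image u : Set E) := by
    rintro _ ⟨x, rfl⟩
    simpa [sum_apply] using Submodule.sum_mem _ fun j _ =>
      Submodule.smul_mem _ _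
        (Submodule.subset_span (Finset.mem_image_of_mem u (Finset.mem_univ j)))
  calc _ ≤ Module.rank 𝕜 (Submodule.span 𝕜 (Finset.univ.image u : Set E)) :=
        Submodule.rank_mono hrange
    _ ≤ (Finset.univ.image u).card := rank_span_finset_le _
    _ ≤ k := by exact_mod_cast Finset.card_image_le.trans (by simp)

lemma exists_sum_rankOne_eq [CompleteSpace E] (T : E →L[𝕜] E) {k : ℕ}
    (hT : LinearMap.rank (T : E →ₗ[𝕜] E) ≤ k) :
    ∃ u v : Fin k → E, (∀ j, ‖u j‖ ≤ 1) ∧ (∀ j, ‖v j‖ ≤ ‖T‖) ∧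
      T = ∑ j, rankOne 𝕜 (u j) (v j) := by
  set W := LinearMap.range (T : E →ₗ[𝕜] E)
  have : FiniteDimensional 𝕜 W :=
    Module.rank_lt_aleph0_iff.mp (hT.trans_lt (Cardinal.natCast_lt_aleph0))
  have hdk : Module.finrank 𝕜 W ≤ k := Module.finrank_le_of_rank_le hT
  set b := stdOrthonormalBasis 𝕜 W
  let u : Fin k → E := fun j => if h : (j : ℕ) < Module.finrank 𝕜 W then b ⟨j, h⟩ else 0
  have hu : ∀ j, ‖u j‖ ≤ 1 := fun j => by
    unfold u; split_ifs
    · exact (b.norm_eq_one _).le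
    · simp
  refine ⟨u, fun j => ContinuousLinearMap.adjoint T (u j), hu, fun j => ?_, ?_⟩
  · simpa using (ContinuousLinearMap.adjoint T).le_opNorm_of_le (hu j)
  · have hP : W.starProjection = ∑ j, rankOne 𝕜 (u j) (u j) := by
      rw [b.starProjection_eq_sum_rankOne]
      refine Fintype.sum_of_injective (Fin.castLE hdk) (Fin.castLE_injective hdk) _ _ ?_ ?_
      · rintro j hj
        have : ¬ (j : ℕ) < Module.finrank 𝕜 W := fun h => hj ⟨⟨j, h⟩, rfl⟩
        simp [u, this]
      · intro i
        simp [u]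
    calc T = W.starProjection ∘L T := by
          ext x; exact (W.starProjection_eq_self_iff.2 (LinearMap.mem_range_self _ x)).symm
      _ = _ := by simp [hP, ContinuousLinearMap.finsetSum_comp, rankOne_comp]

lemma ContinuousLinearMap.opNorm_le_of_tendsto_inner {F ι : Type*} [NormedAddCommGroup F]
    [NormedSpace 𝕜 F] {l : Filter ι} [l.NeBot] {T : ι → F →L[𝕜] E} {B : F →L[𝕜] E} {M : ℝ}
    (hM : ∀ᶠ i in l, ‖T i‖ ≤ M)
    (hT : ∀ x y, Tendsto (fun i => ⟪y, T i x⟫_𝕜) l (𝓝 ⟪y, B x⟫_𝕜)) : ‖B‖ ≤ M := by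
  obtain ⟨i, hi⟩ := hM.exists
  have hM₀ : 0 ≤ M := (norm_nonneg _).trans hi
  refine B.opNorm_le_bound hM₀ fun x => ?_
  have hBx : ‖B x‖ ^ 2 ≤ ‖B x‖ * (M * ‖x‖) := by
    rw [← inner_self_eq_norm_sq (𝕜 := 𝕜)]
    refine (RCLike.re_le_norm _).trans (le_of_tendsto (hT x (B x)).norm (hM.mono fun i hi => ?_))
    exact (norm_inner_le_norm _ _).trans
      (mul_le_mul_of_nonneg_left ((T i).le_of_opNorm_le hi x) (norm_nonneg _))
  nlinarith [norm_nonneg (B x), mul_nonneg hM₀ (norm_nonneg x)]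

lemma exists_rank_le_forall_tendsto_inner [CompleteSpace E] {ι : Type*} (𝒰 : Ultrafilter ι)
    {F : ι → E →L[𝕜] E} {k : ℕ} {M : ℝ} (hrank : ∀ i, LinearMap.rank (F i : E →ₗ[𝕜] E) ≤ k)
    (hM : ∀ i, ‖F i‖ ≤ M) :
    ∃ G : E →L[𝕜] E, LinearMap.rank (G : E →ₗ[𝕜] E) ≤ k ∧
      ∀ x y, Tendsto (fun i => ⟪y, F i x⟫_𝕜) 𝒰 (𝓝 ⟪y, G x⟫_𝕜) := by
  choose u v hu hv hF using fun i => exists_sum_rankOne_eq (F i) (hrank i)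
  choose u' hu' using fun j => exists_forall_tendsto_inner_of_norm_le (𝕜 := 𝕜) 𝒰 (hu · j)
  choose v' hv' using fun j => exists_forall_tendsto_inner_of_norm_le (𝕜 := 𝕜) 𝒰
    fun i => (hv i j).trans (hM i)
  refine ⟨∑ j, rankOne 𝕜 (u' j) (v' j), rank_sum_rankOne_le u' v', fun x y => ?_⟩
  simp only [hF, sum_apply, rankOne_apply, inner_sum, inner_smul_right]
  refine tendsto_finsetSum _ fun j _ => (hv' j x).mul ?_
  simpa only [Function.comp_def, ← starRingEnd_apply, inner_conj_symm] using
    (continuous_star.tendsto _).comp (hu' j y)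

end FiniteRank

section Schatten

variable {H : Type*} [NormedAddCommGroup H] [InnerProductSpace ℂ H] {p c : ℝ} {T : H →L[ℂ] H}

lemma isCompactOperator_of_tendsto_singularValue [CompleteSpace H]
    (hT : Tendsto (singularValue T) atTop (𝓝 0)) : IsCompactOperator T := by
  choose F hFrank hF using fun k : ℕ => exists_rank_le_norm_sub_lt T k (Nat.one_div_pos_of_nat)
  refine isCompactOperator_of_tendsto (l := atTop) ?_
    (Eventually.of_forall fun k => (F k).isCompactOperator_of_rank_le (hFrank k))
  rw [tendsto_iff_norm_sub_tendsto_zero]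
  refine squeeze_zero (fun _ => norm_nonneg _) (fun k => (norm_sub_rev _ _).trans_le (hF k).le) ?_
  simpa using hT.add tendsto_one_div_add_atTop_nhds_zero_nat

lemma memSchatten_of_summable [CompleteSpace H] (hp : 0 < p)
    (hT : Summable fun n => singularValue T n ^ p) : MemSchatten p T := by
  refine ⟨isCompactOperator_of_tendsto_singularValue ?_, hT⟩
  have := hT.tendsto_atTop_zero.rpow_const_nhds_zero (one_div_pos.2 hp)
  simpa [← Real.rpow_mul (singularValue_nonneg T _), hp.ne'] using this

lemma schattenNorm_le_iff (hp : 0 < p) (hc : 0 ≤ c) :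
    schattenNorm p T ≤ c ↔ ∑' n, singularValue T n ^ p ≤ c ^ p := by
  rw [schattenNorm, one_div]
  exact Real.rpow_inv_le_iff_of_pos
    (tsum_nonneg fun n => Real.rpow_nonneg (singularValue_nonneg T n) p) hc hp

lemma singularValue_le_schattenNorm (hp : 0 < p) (hT : MemSchatten p T) (n : ℕ) :
    singularValue T n ≤ schattenNorm p T := by
  rw [schattenNorm, one_div, Real.le_rpow_inv_iff_of_pos (singularValue_nonneg T n)
    (tsum_nonneg fun n => Real.rpow_nonneg (singularValue_nonneg T n) p) hp]
  exact hT.2.le_tsum n fun k _ => Real.rpow_nonneg (singularValue_nonneg T k) p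

lemma sum_range_singularValue_rpow_le (hp : 0 < p) (hT : MemSchatten p T)
    (hTc : schattenNorm p T ≤ c) (m : ℕ) :
    ∑ n ∈ Finset.range m, singularValue T n ^ p ≤ c ^ p := by
  have hc : 0 ≤ c :=
    (singularValue_nonneg T 0).trans ((singularValue_le_schattenNorm hp hT 0).trans hTc)
  exact (hT.2.sum_le_tsum _ fun n _ => Real.rpow_nonneg (singularValue_nonneg T n) p).trans
    ((schattenNorm_le_iff hp hc).1 hTc)

lemma memSchatten_and_schattenNorm_le_of_sum_range_le [CompleteSpace H] (hp : 0 < p) (hc : 0 ≤ c)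
    (hT : ∀ m, ∑ n ∈ Finset.range m, singularValue T n ^ p ≤ c ^ p) :
    MemSchatten p T ∧ schattenNorm p T ≤ c := by
  have hnonneg n : 0 ≤ singularValue T n ^ p := Real.rpow_nonneg (singularValue_nonneg T n) p
  have hsum := summable_of_sum_range_le hnonneg hT
  exact ⟨memSchatten_of_summable hp hsum,
    (schattenNorm_le_iff hp hc).2 (hsum.tsum_le_of_sum_range_le hT)⟩

end Schatten

section WeakClosure

variable {H ι : Type*} [NormedAddCommGroup H] [InnerProductSpace ℂ H] [CompleteSpace H]
  {T : ι → H →L[ℂ] H} {B : H →L[ℂ] H}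

lemma singularValue_le_of_tendsto_inner (𝒰 : Ultrafilter ι) {M r : ℝ} {k : ℕ}
    (hM : ∀ i, ‖T i‖ ≤ M) (hB : ∀ x y, Tendsto (fun i => ⟪y, T i x⟫_ℂ) 𝒰 (𝓝 ⟪y, B x⟫_ℂ))
    (hr : Tendsto (fun i => singularValue (T i) k) 𝒰 (𝓝 r)) : singularValue B k ≤ r := by
  refine le_of_forall_pos_le_add fun ε hε => ?_
  choose F hFrank hF using fun i => exists_rank_le_norm_sub_lt (T i) k (half_pos hε)
  have hFM : ∀ i, ‖F i‖ ≤ 2 * M + ε := fun i => by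
    have := norm_sub_le (T i) (T i - F i)
    rw [sub_sub_cancel] at this
    linarith [hM i, hF i, singularValue_le_norm (T i) k]
  obtain ⟨G, hGrank, hG⟩ := exists_rank_le_forall_tendsto_inner 𝒰 hFrank hFM
  have hTF : ∀ᶠ i in 𝒰, ‖T i - F i‖ ≤ r + ε :=
    (hr.eventually (gt_mem_nhds (lt_add_of_pos_right r (half_pos hε)))).mono fun i hi => by
      linarith [hF i]
  calc singularValue B k ≤ ‖B - G‖ := singularValue_le_norm_sub hGrank
    _ ≤ r + ε := ContinuousLinearMap.opNorm_le_of_tendsto_inner hTF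
        fun x y => by simpa only [sub_apply, inner_sub_right] using (hB x y).sub (hG x y)

theorem memSchatten_and_schattenNorm_le_of_tendsto_inner {l : Filter ι} [l.NeBot] {p c : ℝ}
    (hp : 0 < p) (hT : ∀ i, MemSchatten p (T i) ∧ schattenNorm p (T i) ≤ c)
    (hB : ∀ x y, Tendsto (fun i => ⟪y, T i x⟫_ℂ) l (𝓝 ⟪y, B x⟫_ℂ)) :
    MemSchatten p B ∧ schattenNorm p B ≤ c := by
  let 𝒰 := Ultrafilter.of l
  have hsv : ∀ i k, singularValue (T i) k ≤ c := fun i k =>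
    (singularValue_le_schattenNorm hp (hT i).1 k).trans (hT i).2
  have hc : 0 ≤ c := by
    obtain ⟨i⟩ := l.nonempty_of_neBot
    exact (singularValue_nonneg _ 0).trans (hsv i 0)
  have hr : ∀ k, ∃ r, Tendsto (fun i => singularValue (T i) k) 𝒰 (𝓝 r) := fun k => by
    obtain ⟨r, -, hr⟩ := (isCompact_Icc (a := 0) (b := c)).ultrafilter_le_nhds
      (𝒰.map fun i => singularValue (T i) k) (by
        rw [Ultrafilter.coe_map, le_principal_iff, mem_map]
        exact univ_mem' fun i => ⟨singularValue_nonneg _ k, hsv i k⟩)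
    exact ⟨r, hr⟩
  choose r hr using hr
  have hBr : ∀ k, singularValue B k ≤ r k := fun k =>
    singularValue_le_of_tendsto_inner 𝒰 (fun i => by simpa [singularValue_zero] using hsv i 0)
      (fun x y => (hB x y).mono_left (Ultrafilter.of_le l)) (hr k)
  refine memSchatten_and_schattenNorm_le_of_sum_range_le hp hc fun m => ?_
  calc ∑ k ∈ Finset.range m, singularValue B k ^ p
      ≤ ∑ k ∈ Finset.range m, r k ^ p := Finset.sum_le_sum fun k _ =>
        Real.rpow_le_rpow (singularValue_nonneg B k) (hBr k) hp.le
    _ ≤ c ^ p := le_of_tendsto (tendsto_finsetSum _ fun k _ => (hr k).rpow_const (.inr hp.le))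
        (Eventually.of_forall fun i => sum_range_singularValue_rpow_le hp (hT i).1 (hT i).2 m)

end WeakClosure

section Compression

variable {𝕜 E : Type*} [RCLike 𝕜] [NormedAddCommGroup E] [InnerProductSpace 𝕜 E]

lemma ContinuousLinearMap.tendsto_apply_of_norm_le {F ι : Type*} [NormedAddCommGroup F]
    [NormedSpace 𝕜 F] {l : Filter ι} {T : ι → E →L[𝕜] F} {M : ℝ} {x : ι → E} {x₀ : E} {y : F}
    (hM : ∀ i, ‖T i‖ ≤ M) (hT : Tendsto (fun i => T i x₀) l (𝓝 y)) (hx : Tendsto x l (𝓝 x₀)) :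
    Tendsto (fun i => T i (x i)) l (𝓝 y) := by
  have h₀ : Tendsto (fun i => T i (x i - x₀)) l (𝓝 0) :=
    squeeze_zero_norm (fun i => (T i).le_of_opNorm_le (hM i) _)
      (by simpa using (tendsto_iff_norm_sub_tendsto_zero.1 hx).const_mul M)
  simpa using h₀.add hT

variable (𝕜 E) in
lemma exists_isCompactOperator_norm_le_one_tendsto_apply [TopologicalSpace.SeparableSpace E] :
    ∃ P : ℕ → E →L[𝕜] E, (∀ n, IsCompactOperator (P n)) ∧ (∀ n, ‖P n‖ ≤ 1) ∧
      ∀ x, Tendsto (fun n => P n x) atTop (𝓝 x) := by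
  classical
  obtain ⟨d, hd⟩ := TopologicalSpace.exists_dense_seq E
  let U : ℕ → Submodule 𝕜 E := fun n => Submodule.span 𝕜 ((Finset.range n).image d : Set E)
  have hU : Monotone U := fun m n hmn => Submodule.span_mono
    (Finset.coe_subset.2 (Finset.image_subset_image (Finset.range_subset_range.2 hmn)))
  have hdense : ⊤ ≤ (⨆ n, U n).topologicalClosure := by
    rw [top_le_iff, Submodule.dense_iff_topologicalClosure_eq_top.symm]
    refine hd.mono ?_
    rintro _ ⟨m, rfl⟩
    exact Submodule.mem_iSup_of_mem (m + 1) (Submodule.subset_span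
      (Finset.mem_coe.2 (Finset.mem_image_of_mem d (Finset.mem_range.2 m.lt_succ_self))))
  refine ⟨fun n => (U n).starProjection, fun n => ?_, fun n => (U n).starProjection_norm_le,
    fun x => Submodule.starProjection_tendsto_self U hU x hdense⟩
  exact (U n).starProjection.isCompactOperator_of_forall_mem (U n).starProjection_apply_mem

end Compression

theorem schatten_commutator_bound_extends_to_bounded_operators_general
    (H : Type*) [NormedAddCommGroup H] [InnerProductSpace ℂ H] [CompleteSpace H]
    [TopologicalSpace.SeparableSpace H]
    (p : ℝ) (hp : 1 ≤ p) (S : H →L[ℂ] H) (C : ℝ) (hC : 0 < C)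
    (hS : ∀ T : H →L[ℂ] H, IsCompactOperator ⇑T →
      MemSchatten p (S * T - T * S) ∧ schattenNorm p (S * T - T * S) ≤ C * ‖T‖) :
    ∀ X : H →L[ℂ] H,
      MemSchatten p (S * X - X * S) ∧ schattenNorm p (S * X - X * S) ≤ C * ‖X‖ := by
  intro X
  obtain ⟨P, hPc, hP1, hP⟩ := exists_isCompactOperator_norm_le_one_tendsto_apply ℂ H
  set Xn : ℕ → H →L[ℂ] H := fun n => P n * X * P n
  have hXn : ∀ n, ‖Xn n‖ ≤ ‖X‖ := fun n =>
    calc ‖P n * X * P n‖ ≤ ‖P n‖ * ‖X‖ * ‖P n‖ := norm_mul₃_le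
      _ ≤ 1 * ‖X‖ * 1 := by gcongr <;> exact hP1 n
      _ = ‖X‖ := by ring
  have hX : ∀ x, Tendsto (fun n => Xn n x) atTop (𝓝 (X x)) := fun x =>
    ContinuousLinearMap.tendsto_apply_of_norm_le (T := P) (x := fun n => X (P n x)) hP1
      (hP (X x)) ((X.continuous.tendsto x).comp (hP x))
  have hSX : ∀ x, Tendsto (fun n => (S * Xn n - Xn n * S) x) atTop (𝓝 ((S * X - X * S) x)) :=
    fun x => ((S.continuous.tendsto _).comp (hX x)).sub (hX (S x))
  refine memSchatten_and_schattenNorm_le_of_tendsto_inner (l := atTop) (by linarith) (fun n => ?_)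
    fun x y => tendsto_const_nhds.inner (hSX x)
  exact (hS _ ((hPc n).comp_clm (X * P n))).imp_right fun h =>
    h.trans (mul_le_mul_of_nonneg_left (hXn n) hC.le)

/-- If `[S, T] ∈ S_p(H)` with `‖[S, T]‖_p ≤ C‖T‖` for every compact `T`, then the same
holds for every bounded operator `X`: `[S, X] ∈ S_p(H)` and `‖[S, X]‖_p ≤ C‖X‖`. -/
theorem schatten_commutator_bound_extends_to_bounded_operators
    (H : Type*) [NormedAddCommGroup H] [InnerProductSpace ℂ H] [CompleteSpace H]
    [TopologicalSpace.SeparableSpace H] (hinf : ¬ FiniteDimensional ℂ H)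
    (p : ℝ) (hp : 1 ≤ p) (S : H →L[ℂ] H) (C : ℝ) (hC : 0 < C)
    (hS : ∀ T : H →L[ℂ] H, IsCompactOperator ⇑T →
      MemSchatten p (S * T - T * S) ∧ schattenNorm p (S * T - T * S) ≤ C * ‖T‖) :
    ∀ X : H →L[ℂ] H,
      MemSchatten p (S * X - X * S) ∧ schattenNorm p (S * X - X * S) ≤ C * ‖X‖ :=
  schatten_commutator_bound_extends_to_bounded_operators_general H p hp S C hC hS
end

section
/- Let H be a separable infinite-dimensional complex Hilbert space. The first continuous Hochschild cohomology of K(H) with coefficients in the finite-rank operators vanishes, ℋ¹(K(H), F(H)) = 0 (every bounded derivation K(H) → F(H) is inner via an element of F(H)), while the first continuous Hochschild cohomology with coefficients in K(H) itself does not vanish, ℋ¹(K(H), K(H)) ≠ 0 (there exists a bounded derivation K(H) → K(H) that is not inner via any element of K(H)). -/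
open Submodule InnerProductSpace

theorem Submodule.not_linearIndependent_of_forall_mem {R M : Type*} [Ring R]
    [StrongRankCondition R] [AddCommGroup M] [Module R M] {W : Submodule R M} [Module.Finite R W]
    {v : ℕ → M} (hv : ∀ n, v n ∈ W) : ¬ LinearIndependent R v := fun hli =>
  Module.Finite.not_linearIndependent_of_infinite (fun n => (⟨v n, hv n⟩ : W))
    (LinearIndependent.of_comp W.subtype hli)

theorem IsCompactOperator.not_linearIndependent_of_apply_eq_smul {𝕜 E : Type*} [RCLike 𝕜]
    [NormedAddCommGroup E] [InnerProductSpace 𝕜 E] [CompleteSpace E] {A : E →L[𝕜] E}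
    (hA : IsCompactOperator A) {μ : 𝕜} (hμ : μ ≠ 0) {v : ℕ → E} (hv : ∀ n, A (v n) = μ • v n) :
    ¬ LinearIndependent 𝕜 v :=
  have := ContinuousLinearMap.finite_dimensional_eigenspace hA μ hμ
  not_linearIndependent_of_forall_mem fun n => Module.End.mem_eigenspace_iff.mpr (hv n)

theorem exists_eq_smul_one_of_forall_commute_rankOne {𝕜 E : Type*} [RCLike 𝕜]
    [NormedAddCommGroup E] [InnerProductSpace 𝕜 E] {z : E →L[𝕜] E}
    (hz : ∀ u v : E, Commute z (rankOne 𝕜 u v)) : ∃ c : 𝕜, z = c • 1 := by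
  rcases subsingleton_or_nontrivial E with _ | _
  · exact ⟨0, Subsingleton.elim _ _⟩
  obtain ⟨ξ, hξ⟩ := exists_ne (0 : E)
  refine ⟨inner 𝕜 ξ (z ξ) / inner 𝕜 ξ ξ, ContinuousLinearMap.ext fun u => ?_⟩
  have h := congr($((hz u ξ).eq) ξ)
  simp only [mul_apply_eq_comp, rankOne_apply, map_smul] at h
  rw [smul_apply, one_apply_eq_self, div_eq_inv_mul, mul_smul,
    ← h, inv_smul_smul₀ (inner_self_ne_zero.mpr hξ)]

theorem isCompactOperator_rankOne {𝕜 E F : Type*} [RCLike 𝕜] [NormedAddCommGroup E]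
    [InnerProductSpace 𝕜 E] [NormedAddCommGroup F] [InnerProductSpace 𝕜 F] (u : F) (v : E) :
    IsCompactOperator (rankOne 𝕜 u v) := by
  rw [rankOne_def']
  exact (isCompactOperator_of_locallyCompactSpace_dom (innerSL 𝕜 v)).clm_comp
    (ContinuousLinearMap.toSpanSingleton 𝕜 u)

section
variable {H : Type*} [NormedAddCommGroup H] [InnerProductSpace ℂ H]

theorem not_isFiniteRank_one (hinf : ¬ FiniteDimensional ℂ H) : ¬ IsFiniteRank (1 : H →L[ℂ] H) :=
  fun h => hinf <| by
    rw [IsFiniteRank, show ((1 : H →L[ℂ] H) : H →ₗ[ℂ] H) = LinearMap.id from rfl,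
      LinearMap.range_id] at h
    exact Module.Finite.equiv (LinearEquiv.ofTop ⊤ rfl)

theorem exists_norm_eq_one_mem_orthogonal_apply_ne_zero {z : H →L[ℂ] H} (hz : ¬ IsFiniteRank z)
    (M : Submodule ℂ H) [FiniteDimensional ℂ M] : ∃ v, ‖v‖ = 1 ∧ v ∈ Mᗮ ∧ z v ≠ 0 := by
  obtain ⟨v, hvM, hzv⟩ : ∃ v ∈ Mᗮ, z v ≠ 0 := by
    by_contra! h
    refine hz ?_
    have hrange : LinearMap.range (z : H →ₗ[ℂ] H) = M.map (z : H →ₗ[ℂ] H) := by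
      rw [LinearMap.range_eq_map, ← sup_orthogonal_of_hasOrthogonalProjection (K := M),
        Submodule.map_sup, LinearMap.le_ker_iff_map.mp fun v hv => h v hv, sup_bot_eq]
    rw [IsFiniteRank, hrange]
    infer_instance
  have hv : v ≠ 0 := by rintro rfl; simp at hzv
  refine ⟨(‖v‖⁻¹ : ℂ) • v, norm_smul_inv_norm hv, Mᗮ.smul_mem _ hvM, ?_⟩
  rw [map_smul]
  exact smul_ne_zero (by simpa using hv) hzv

theorem exists_orthonormal_seq (hinf : ¬ FiniteDimensional ℂ H) :
    ∃ e : ℕ → H, Orthonormal ℂ e := by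
  obtain ⟨e, he1, he⟩ := exists_seq_of_forall_finset_exists (fun v : H => ‖v‖ = 1)
    (fun u v => ⟪u, v⟫_ℂ = 0) fun s _ => by
      obtain ⟨v, hv1, hvs, -⟩ :=
        exists_norm_eq_one_mem_orthogonal_apply_ne_zero (not_isFiniteRank_one hinf) (span ℂ s)
      exact ⟨v, hv1, fun u hu => inner_right_of_mem_orthogonal (subset_span hu) hvs⟩
  refine ⟨e, he1, fun m n hmn => ?_⟩
  rcases hmn.lt_or_gt with h | h
  · exact he m n h
  · exact inner_eq_zero_symm.mp (he n m h)

theorem exists_eq_mul_sub_mul_of_derivation [Nontrivial H] (D : (H →L[ℂ] H) → (H →L[ℂ] H))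
    (hadd : ∀ S T : H →L[ℂ] H, IsCompactOperator S → IsCompactOperator T →
      D (S + T) = D S + D T)
    (hsmul : ∀ (c : ℂ) (T : H →L[ℂ] H), IsCompactOperator T → D (c • T) = c • D T)
    (hbound : ∃ C : ℝ, ∀ T : H →L[ℂ] H, IsCompactOperator T → ‖D T‖ ≤ C * ‖T‖)
    (hmul : ∀ S T : H →L[ℂ] H, IsCompactOperator S → IsCompactOperator T →
      D (S * T) = S * D T + D S * T) :
    ∃ x : H →L[ℂ] H, ∀ T : H →L[ℂ] H, IsCompactOperator T → D T = T * x - x * T := by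
  obtain ⟨C, hC⟩ := hbound
  obtain ⟨ξ, hξ⟩ := exists_norm_eq H zero_le_one
  let x : H →ₗ[ℂ] H :=
    { toFun η := D (rankOne ℂ η ξ) ξ
      map_add' a b := by
        simp [hadd _ _ (isCompactOperator_rankOne a ξ) (isCompactOperator_rankOne b ξ)]
      map_smul' c a := by simp [hsmul c _ (isCompactOperator_rankOne a ξ)] }
  have hx (η : H) : ‖x η‖ ≤ C * ‖η‖ := calc
    ‖x η‖ ≤ ‖D (rankOne ℂ η ξ)‖ * ‖ξ‖ := (D (rankOne ℂ η ξ)).le_opNorm ξ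
    _ ≤ C * ‖η‖ := by simpa [hξ] using hC _ (isCompactOperator_rankOne η ξ)
  refine ⟨-x.mkContinuous C hx, fun T hT => ContinuousLinearMap.ext fun η => ?_⟩
  have key := congr($(hmul T _ hT (isCompactOperator_rankOne η ξ)) ξ)
  rw [ContinuousLinearMap.mul_def, comp_rankOne] at key
  simp [x, key, hξ]

theorem exists_isCompactOperator_mul_sub_mul_ne {P : H →L[ℂ] H}
    (hP : ∀ c : ℂ, ¬ IsCompactOperator ⇑(P - c • 1)) {x : H →L[ℂ] H} (hx : IsCompactOperator x) :
    ∃ T : H →L[ℂ] H, IsCompactOperator T ∧ T * P - P * T ≠ T * x - x * T := by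
  by_contra! h
  obtain ⟨c, hc⟩ := exists_eq_smul_one_of_forall_commute_rankOne (z := P - x) fun u v => by
    have := h _ (isCompactOperator_rankOne u v)
    refine sub_eq_zero.mp ?_
    calc (P - x) * rankOne ℂ u v - rankOne ℂ u v * (P - x)
        = (rankOne ℂ u v * x - x * rankOne ℂ u v) - (rankOne ℂ u v * P - P * rankOne ℂ u v) := by
          noncomm_ring
      _ = 0 := by rw [this, sub_self]
  exact hP c (by rwa [← hc, sub_sub_cancel])

variable [CompleteSpace H]

theorem exists_norm_eq_one_apply_mem_orthogonal_ne_zero {z : H →L[ℂ] H} (hz : ¬ IsFiniteRank z)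
    (V : Submodule ℂ H) [FiniteDimensional ℂ V] : ∃ v, ‖v‖ = 1 ∧ z v ∈ Vᗮ ∧ z v ≠ 0 := by
  obtain ⟨v, hv1, hvM, hzv⟩ :=
    exists_norm_eq_one_mem_orthogonal_apply_ne_zero hz (V.map (z.adjoint : H →ₗ[ℂ] H))
  refine ⟨v, hv1, (mem_orthogonal _ _).mpr fun u hu => ?_, hzv⟩
  rw [← ContinuousLinearMap.adjoint_inner_left]
  exact inner_right_of_mem_orthogonal (mem_map_of_mem hu) hvM

theorem exists_seq_of_forall_not_isFiniteRank_sub_smul_one {x : H →L[ℂ] H}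
    (hx : ∀ c : ℂ, ¬ IsFiniteRank (x - c • 1)) :
    ∃ e f : ℕ → H, Orthonormal ℂ e ∧ (∀ n, ‖f n‖ = 1) ∧
      Pairwise (fun m n => ⟪e m, x (e n)⟫_ℂ = 0) ∧
      LinearIndependent ℂ fun n => (x - ⟪e n, x (e n)⟫_ℂ • 1) (f n) := by
  let y (p : H × H) : H := (x - ⟪p.1, x p.1⟫_ℂ • 1) p.2
  let r (p q : H × H) : Prop :=
    ⟪p.1, q.1⟫_ℂ = 0 ∧ ⟪p.1, x q.1⟫_ℂ = 0 ∧ ⟪q.1, x p.1⟫_ℂ = 0 ∧ ⟪y p, y q⟫_ℂ = 0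
  have : Std.Symm r := ⟨fun p q ⟨h₁, h₂, h₃, h₄⟩ =>
    ⟨inner_eq_zero_symm.mp h₁, h₃, h₂, inner_eq_zero_symm.mp h₄⟩⟩
  have hinf : ¬ FiniteDimensional ℂ H := fun _ => hx 0 (by unfold IsFiniteRank; infer_instance)
  obtain ⟨p, hP, hr⟩ := exists_seq_of_forall_finset_exists'
    (fun p => ‖p.1‖ = 1 ∧ ‖p.2‖ = 1 ∧ y p ≠ 0) r fun s _ => by
      classical
      let M : Finset H := s.image Prod.fst ∪ s.image (x ·.1) ∪ s.image (x.adjoint ·.1)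
      obtain ⟨e, he1, heM, -⟩ :=
        exists_norm_eq_one_mem_orthogonal_apply_ne_zero (not_isFiniteRank_one hinf) (span ℂ ↑M)
      obtain ⟨f, hf1, hfV, hf0⟩ :=
        exists_norm_eq_one_apply_mem_orthogonal_ne_zero (hx ⟪e, x e⟫_ℂ) (span ℂ ↑(s.image y))
      have hM {v : H} (hv : v ∈ M) : ⟪v, e⟫_ℂ = 0 :=
        inner_right_of_mem_orthogonal (subset_span hv) heM
      refine ⟨(e, f), ⟨he1, hf1, hf0⟩, fun q hq => ⟨?_, ?_, ?_, ?_⟩⟩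
      · exact hM <| Finset.mem_union_left _ <| Finset.mem_union_left _ <|
          Finset.mem_image_of_mem _ hq
      · rw [← ContinuousLinearMap.adjoint_inner_left]
        exact hM (Finset.mem_union_right _ (Finset.mem_image_of_mem _ hq))
      · exact inner_eq_zero_symm.mp
          (hM (Finset.mem_union_left _ (Finset.mem_union_right _ (Finset.mem_image_of_mem _ hq))))
      · exact inner_right_of_mem_orthogonal (subset_span (Finset.mem_image_of_mem _ hq)) hfV
  refine ⟨fun n => (p n).1, fun n => (p n).2, ⟨fun n => (hP n).1, fun m n hmn => (hr hmn).1⟩,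
    fun n => (hP n).2.1, fun m n hmn => (hr hmn).2.1, ?_⟩
  exact linearIndependent_of_ne_zero_of_inner_eq_zero (fun n => (hP n).2.2)
    fun m n hmn => (hr hmn).2.2.2

theorem exists_isCompactOperator_apply_orthonormal {e : ℕ → H} (he : Orthonormal ℂ e) {f : ℕ → H}
    (hf : ∀ n, ‖f n‖ ≤ 1) :
    ∃ T : H →L[ℂ] H, IsCompactOperator T ∧ (∀ n, T (e n) = (2⁻¹ : ℂ) ^ n • f n) ∧
      ∀ v, (∀ n, ⟪e n, v⟫_ℂ = 0) → T v = 0 := by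
  let S (n : ℕ) : H →L[ℂ] H := (2⁻¹ : ℂ) ^ n • rankOne ℂ (f n) (e n)
  have hS : Summable S := .of_norm_bounded summable_geometric_two fun n => by
    simpa [S, norm_smul, he.1 n] using hf n
  have hSv (v : H) : (∑' n, S n) v = ∑' n, ((2⁻¹ : ℂ) ^ n * ⟪e n, v⟫_ℂ) • f n := by
    rw [← ContinuousLinearMap.apply_apply v, (ContinuousLinearMap.apply ℂ H v).map_tsum hS]
    simp [S, mul_smul]
  refine ⟨∑' n, S n, isCompactOperator_of_tendsto hS.hasSum.tendsto_sum_nat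
    (.of_forall fun s => (compactOperator _ H H).sum_mem fun n _ =>
      (isCompactOperator_rankOne _ _).smul _), fun m => ?_, fun v hv => by simp [hSv, hv]⟩
  rw [hSv, tsum_eq_single m fun n hn => by simp [he.2 hn],
    inner_self_eq_one_of_norm_eq_one (he.1 m), mul_one]

theorem exists_isFiniteRank_sub_smul_one {x : H →L[ℂ] H}
    (hx : ∀ T : H →L[ℂ] H, IsCompactOperator T → IsFiniteRank (T * x - x * T)) :
    ∃ c : ℂ, IsFiniteRank (x - c • 1) := by
  by_contra! hnot
  obtain ⟨e, f, he, hf, hxe, hy⟩ := exists_seq_of_forall_not_isFiniteRank_sub_smul_one hnot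
  obtain ⟨T, hTc, hTe, hT0⟩ := exists_isCompactOperator_apply_orthonormal he fun n => (hf n).le
  have hTx (n : ℕ) : T (x (e n)) = ⟪e n, x (e n)⟫_ℂ • T (e n) := by
    have hw : T (x (e n) - ⟪e n, x (e n)⟫_ℂ • e n) = 0 := hT0 _ fun m => by
      rcases eq_or_ne m n with rfl | hmn
      · simp [he.1 m]
      · simp [hxe hmn, he.2 hmn]
    rwa [map_sub, map_smul, sub_eq_zero] at hw
  let A : H →ₗ[ℂ] H := T * x - x * T
  have : FiniteDimensional ℂ (LinearMap.range A) := hx T hTc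
  refine not_linearIndependent_of_forall_mem (W := LinearMap.range A)
    (fun n => LinearMap.mem_range.mpr ⟨-(2 : ℂ) ^ n • e n, ?_⟩) hy
  simp [A, hTx, hTe, smul_smul, mul_comm ⟪e n, x (e n)⟫_ℂ, neg_add_eq_sub]

theorem exists_not_isCompactOperator_sub_smul_one (hinf : ¬ FiniteDimensional ℂ H) :
    ∃ P : H →L[ℂ] H, ∀ c : ℂ, ¬ IsCompactOperator ⇑(P - c • 1) := by
  obtain ⟨e, he⟩ := exists_orthonormal_seq hinf
  let K : Submodule ℂ H := (span ℂ (Set.range fun n => e (2 * n + 1)))ᗮ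
  have heven (n : ℕ) : e (2 * n) ∈ K :=
    (isOrtho_span (s := Set.range fun n => e (2 * n))
      (t := Set.range fun n => e (2 * n + 1))).mpr
      (by rintro _ ⟨m, rfl⟩ _ ⟨k, rfl⟩; exact he.2 (by omega)) |>.le (subset_span ⟨n, rfl⟩)
  have hodd (n : ℕ) : e (2 * n + 1) ∈ Kᗮ := le_orthogonal_orthogonal _ (subset_span ⟨n, rfl⟩)
  refine ⟨K.starProjection, fun c hc => ?_⟩
  rcases eq_or_ne c 0 with rfl | hc0
  · refine hc.not_linearIndependent_of_apply_eq_smul one_ne_zero (v := fun n => e (2 * n))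
      (fun n => by simp [starProjection_eq_self_iff.mpr (heven n)])
      (he.linearIndependent.comp _ fun a b h => by omega)
  · refine hc.not_linearIndependent_of_apply_eq_smul (neg_ne_zero.mpr hc0)
      (v := fun n => e (2 * n + 1))
      (fun n => by simp [(starProjection_apply_eq_zero_iff K).mpr (hodd n), neg_smul])
      (he.linearIndependent.comp _ fun a b h => by omega)

end

theorem cohomological_asymmetry_for_compact_operators_general
    (H : Type*) [NormedAddCommGroup H] [InnerProductSpace ℂ H] [CompleteSpace H]
    (hinf : ¬ FiniteDimensional ℂ H) :
    (∀ D : (H →L[ℂ] H) → (H →L[ℂ] H),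
      (∀ S T : H →L[ℂ] H, IsCompactOperator ⇑S → IsCompactOperator ⇑T →
        D (S + T) = D S + D T) →
      (∀ (c : ℂ) (T : H →L[ℂ] H), IsCompactOperator ⇑T → D (c • T) = c • D T) →
      (∃ C : ℝ, ∀ T : H →L[ℂ] H, IsCompactOperator ⇑T → ‖D T‖ ≤ C * ‖T‖) →
      (∀ S T : H →L[ℂ] H, IsCompactOperator ⇑S → IsCompactOperator ⇑T →
        D (S * T) = S * D T + D S * T) →
      (∀ T : H →L[ℂ] H, IsCompactOperator ⇑T → IsFiniteRank (D T)) →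
      ∃ x : H →L[ℂ] H, IsFiniteRank x ∧
        ∀ T : H →L[ℂ] H, IsCompactOperator ⇑T → D T = T * x - x * T) ∧
    (∃ D : (H →L[ℂ] H) → (H →L[ℂ] H),
      (∀ S T : H →L[ℂ] H, IsCompactOperator ⇑S → IsCompactOperator ⇑T →
        D (S + T) = D S + D T) ∧
      (∀ (c : ℂ) (T : H →L[ℂ] H), IsCompactOperator ⇑T → D (c • T) = c • D T) ∧
      (∃ C : ℝ, ∀ T : H →L[ℂ] H, IsCompactOperator ⇑T → ‖D T‖ ≤ C * ‖T‖) ∧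
      (∀ S T : H →L[ℂ] H, IsCompactOperator ⇑S → IsCompactOperator ⇑T →
        D (S * T) = S * D T + D S * T) ∧
      (∀ T : H →L[ℂ] H, IsCompactOperator ⇑T → IsCompactOperator ⇑(D T)) ∧
      (∀ x : H →L[ℂ] H, IsCompactOperator ⇑x →
        ∃ T : H →L[ℂ] H, IsCompactOperator ⇑T ∧ D T ≠ T * x - x * T)) := by
  have : Nontrivial H := not_subsingleton_iff_nontrivial.mp fun _ => hinf inferInstance
  refine ⟨fun D hadd hsmul hbound hmul hfin => ?_, ?_⟩
  · obtain ⟨x, hx⟩ := exists_eq_mul_sub_mul_of_derivation D hadd hsmul hbound hmul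
    obtain ⟨c, hc⟩ := exists_isFiniteRank_sub_smul_one fun T hT => hx T hT ▸ hfin T hT
    refine ⟨x - c • 1, hc, fun T hT => ?_⟩
    simp [hx T hT, mul_sub, sub_mul]
  · obtain ⟨P, hP⟩ := exists_not_isCompactOperator_sub_smul_one hinf
    refine ⟨fun T => T * P - P * T, fun S T _ _ => by noncomm_ring, fun c T _ => by
      simp [smul_sub], ⟨2 * ‖P‖, fun T _ => ?_⟩, fun S T _ _ => by noncomm_ring,
      fun T hT => (hT.comp_clm P).sub (hT.clm_comp P),
      fun x hx => exists_isCompactOperator_mul_sub_mul_ne hP hx⟩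
    calc ‖T * P - P * T‖ ≤ ‖T‖ * ‖P‖ + ‖P‖ * ‖T‖ :=
          (norm_sub_le _ _).trans (add_le_add (norm_mul_le _ _) (norm_mul_le _ _))
      _ = 2 * ‖P‖ * ‖T‖ := by ring

/-- Cohomological asymmetry for `K(H)` on a separable infinite-dimensional complex Hilbert
space: `ℋ¹(K(H), F(H)) = 0`, i.e. every bounded derivation of `K(H)` with values in the
finite-rank operators is inner via a finite-rank operator; while
`ℋ¹(K(H), K(H)) ≠ 0`, i.e. there exists a bounded derivation of `K(H)` into itself that is
not inner via any compact operator. -/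
theorem cohomological_asymmetry_for_compact_operators
    (H : Type*) [NormedAddCommGroup H] [InnerProductSpace ℂ H] [CompleteSpace H]
    [TopologicalSpace.SeparableSpace H] (hinf : ¬ FiniteDimensional ℂ H) :
    (∀ D : (H →L[ℂ] H) → (H →L[ℂ] H),
      (∀ S T : H →L[ℂ] H, IsCompactOperator ⇑S → IsCompactOperator ⇑T →
        D (S + T) = D S + D T) →
      (∀ (c : ℂ) (T : H →L[ℂ] H), IsCompactOperator ⇑T → D (c • T) = c • D T) →
      (∃ C : ℝ, ∀ T : H →L[ℂ] H, IsCompactOperator ⇑T → ‖D T‖ ≤ C * ‖T‖) →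
      (∀ S T : H →L[ℂ] H, IsCompactOperator ⇑S → IsCompactOperator ⇑T →
        D (S * T) = S * D T + D S * T) →
      (∀ T : H →L[ℂ] H, IsCompactOperator ⇑T → IsFiniteRank (D T)) →
      ∃ x : H →L[ℂ] H, IsFiniteRank x ∧
        ∀ T : H →L[ℂ] H, IsCompactOperator ⇑T → D T = T * x - x * T) ∧
    (∃ D : (H →L[ℂ] H) → (H →L[ℂ] H),
      (∀ S T : H →L[ℂ] H, IsCompactOperator ⇑S → IsCompactOperator ⇑T →
        D (S + T) = D S + D T) ∧
      (∀ (c : ℂ) (T : H →L[ℂ] H), IsCompactOperator ⇑T → D (c • T) = c • D T) ∧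
      (∃ C : ℝ, ∀ T : H →L[ℂ] H, IsCompactOperator ⇑T → ‖D T‖ ≤ C * ‖T‖) ∧
      (∀ S T : H →L[ℂ] H, IsCompactOperator ⇑S → IsCompactOperator ⇑T →
        D (S * T) = S * D T + D S * T) ∧
      (∀ T : H →L[ℂ] H, IsCompactOperator ⇑T → IsCompactOperator ⇑(D T)) ∧
      (∀ x : H →L[ℂ] H, IsCompactOperator ⇑x →
        ∃ T : H →L[ℂ] H, IsCompactOperator ⇑T ∧ D T ≠ T * x - x * T)) :=
  cohomological_asymmetry_for_compact_operators_general H hinf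
end
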